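/- arXiv:1712.06411 — 8 statements merged into one kernel-verified Lean document; each statement's English description precedes it below -/
import Mathlib

section
/- Let 0 < p < 1 and let a = (a_k)_{k≥1} be a probability distribution on the positive integers with finite mean, satisfying for all k ≥ 1 the equations a_{k-1}(k-1)p + Σ_{j=k+1}^∞ a_j·C(j,k)·p^k·(1-p)^{j-k} - a_k(1 - λ + kp - p^k) = 0 (with a_0 = 0), for some λ ∈ ℝ. Then its generating function F(z) = Σ_{j≥1} a_j z^j satisfies F(pz + 1 - p) = (1-λ)F(z) + p(z - z²)F'(z) + F(1-p) for z ∈ [0,1). -/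
/-- If `a` is a probability distribution on the positive integers with finite mean
satisfying the quasi-stationarity equations for the generator `Q` with eigenvalue `-λ`,
then its generating function `F` satisfies
`F(pz+1-p) = (1-λ)F(z) + p(z-z²)F'(z) + F(1-p)` for `z ∈ [0,1)`. -/
theorem stmt_2 (p lam : ℝ) (hp : 0 < p) (hp1 : p < 1)
    (a : ℕ → ℝ) (ha0 : a 0 = 0)
    (hnonneg : ∀ k, 0 ≤ a k)
    (hsum : ∑' k : ℕ, a k = 1)
    (hmean : Summable (fun k : ℕ => (k : ℝ) * a k))
    (hS : ∀ k : ℕ, Summable (fun j : ℕ =>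
      a (k + 1 + j) * (Nat.choose (k + 1 + j) k : ℝ) * p ^ k * (1 - p) ^ (j + 1)))
    (heig : ∀ k : ℕ, 1 ≤ k →
      a (k - 1) * ((k : ℝ) - 1) * p +
        (∑' j : ℕ, a (k + 1 + j) * (Nat.choose (k + 1 + j) k : ℝ) * p ^ k *
          (1 - p) ^ (j + 1)) -
        a k * (1 - lam + (k : ℝ) * p - p ^ k) = 0) :
    ∀ z ∈ Set.Ico (0:ℝ) 1,
      (∑' j : ℕ, a (j + 1) * (p * z + 1 - p) ^ (j + 1)) =
        (1 - lam) * (∑' j : ℕ, a (j + 1) * z ^ (j + 1)) +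
          p * (z - z ^ 2) *
            deriv (fun w : ℝ => ∑' j : ℕ, a (j + 1) * w ^ (j + 1)) z +
          (∑' j : ℕ, a (j + 1) * (1 - p) ^ (j + 1)) := by
  intro z hz
  obtain ⟨hz0, hz1⟩ := hz
  have h1p : (0:ℝ) ≤ 1 - p := by linarith
  -- basic summability facts
  have sA : Summable a := by
    by_contra h
    rw [tsum_eq_zero_of_not_summable h] at hsum
    norm_num at hsum
  have sA1 : Summable (fun n : ℕ => a (n + 1)) :=
    sA.comp_injective (add_left_injective 1)
  have s1 : Summable (fun n : ℕ => ((n : ℝ) + 1) * a (n + 1)) := by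
    have h := hmean.comp_injective (add_left_injective 1)
    exact h.congr (fun n => by simp [Function.comp])
  -- summability of the series at z
  have sz : Summable (fun j : ℕ => a (j + 1) * z ^ (j + 1)) := by
    refine Summable.of_nonneg_of_le
      (fun j => mul_nonneg (hnonneg _) (pow_nonneg hz0 _)) (fun j => ?_) sA1
    have hzp : z ^ (j + 1) ≤ 1 := pow_le_one₀ hz0 hz1.le
    calc a (j + 1) * z ^ (j + 1) ≤ a (j + 1) * 1 :=
          mul_le_mul_of_nonneg_left hzp (hnonneg _)
      _ = a (j + 1) := mul_one _
  have sdz : Summable (fun j : ℕ => a (j + 1) * (((j : ℝ) + 1) * z ^ j)) := by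
    refine Summable.of_nonneg_of_le
      (fun j => mul_nonneg (hnonneg _)
        (mul_nonneg (by positivity) (pow_nonneg hz0 _))) (fun j => ?_) s1
    have hzp : z ^ j ≤ 1 := pow_le_one₀ hz0 hz1.le
    calc a (j + 1) * (((j : ℝ) + 1) * z ^ j)
        ≤ a (j + 1) * (((j : ℝ) + 1) * 1) := by
          apply mul_le_mul_of_nonneg_left _ (hnonneg _)
          exact mul_le_mul_of_nonneg_left hzp (by positivity)
      _ = ((j : ℝ) + 1) * a (j + 1) := by ring
  have s3 : Summable (fun j : ℕ => ((j : ℝ) * p * a j) * z ^ (j + 1)) := by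
    refine Summable.of_nonneg_of_le
      (fun j => mul_nonneg (mul_nonneg (mul_nonneg (Nat.cast_nonneg j) hp.le) (hnonneg j))
        (pow_nonneg hz0 _)) (fun j => ?_) (hmean.mul_left p)
    have hzp : z ^ (j + 1) ≤ 1 := pow_le_one₀ hz0 hz1.le
    have h1 : (0:ℝ) ≤ (j : ℝ) * p * a j :=
      mul_nonneg (mul_nonneg (Nat.cast_nonneg j) hp.le) (hnonneg j)
    calc ((j : ℝ) * p * a j) * z ^ (j + 1) ≤ ((j : ℝ) * p * a j) * 1 :=
          mul_le_mul_of_nonneg_left hzp h1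
      _ = p * ((j : ℝ) * a j) := by ring
  -- derivative computation
  have hd : HasDerivAt (fun w : ℝ => ∑' j : ℕ, a (j + 1) * w ^ (j + 1))
      (∑' j : ℕ, a (j + 1) * (((j : ℝ) + 1) * z ^ j)) z := by
    set r : ℝ := (1 + z) / 2 with hr
    have hzr : z < r := by simp only [hr]; linarith
    have hr1 : r < 1 := by simp only [hr]; linarith
    have hr0 : 0 < r := by simp only [hr]; linarith
    have su : Summable (fun n : ℕ => (((n : ℝ) + 1) * a (n + 1)) * r ^ n) := by
      refine Summable.of_nonneg_of_le
        (fun n => mul_nonneg (mul_nonneg (by positivity) (hnonneg _))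
          (pow_nonneg hr0.le _)) (fun n => ?_) s1
      have hrp : r ^ n ≤ 1 := pow_le_one₀ hr0.le hr1.le
      have h1 : (0:ℝ) ≤ ((n : ℝ) + 1) * a (n + 1) := mul_nonneg (by positivity) (hnonneg _)
      calc (((n : ℝ) + 1) * a (n + 1)) * r ^ n ≤ (((n : ℝ) + 1) * a (n + 1)) * 1 :=
            mul_le_mul_of_nonneg_left hrp h1
        _ = ((n : ℝ) + 1) * a (n + 1) := mul_one _
    refine hasDerivAt_tsum_of_isPreconnected su (isOpen_Ioo (a := -r) (b := r))
      isPreconnected_Ioo (g' := fun n y => a (n + 1) * (((n : ℝ) + 1) * y ^ n))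
      (fun n y _ => ?_) (fun n y hy => ?_) (y₀ := 0) ⟨by linarith, hr0⟩ ?_
      ⟨by linarith, hzr⟩
    · have := (hasDerivAt_pow (n + 1) y).const_mul (a (n + 1))
      simpa [mul_comm, mul_assoc, mul_left_comm] using this
    · obtain ⟨hy1, hy2⟩ := hy
      have hyr : |y| ≤ r := by rw [abs_le]; constructor <;> linarith
      have hyn : |y| ^ n ≤ r ^ n := pow_le_pow_left₀ (abs_nonneg y) hyr n
      rw [Real.norm_eq_abs, abs_mul, abs_mul, abs_pow]
      rw [abs_of_nonneg (hnonneg (n + 1)), abs_of_nonneg (by positivity : (0:ℝ) ≤ (n:ℝ) + 1)]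
      calc a (n + 1) * (((n : ℝ) + 1) * |y| ^ n)
          ≤ a (n + 1) * (((n : ℝ) + 1) * r ^ n) := by
            apply mul_le_mul_of_nonneg_left _ (hnonneg (n + 1))
            exact mul_le_mul_of_nonneg_left hyn (by positivity)
        _ = (((n : ℝ) + 1) * a (n + 1)) * r ^ n := by ring
    · simpa using summable_zero
  have hderiv : deriv (fun w : ℝ => ∑' j : ℕ, a (j + 1) * w ^ (j + 1)) z
      = ∑' j : ℕ, a (j + 1) * (((j : ℝ) + 1) * z ^ j) := hd.deriv
  -- the coefficient sequence
  set c : ℕ → ℝ := fun m =>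
    (1 - lam) * a (m + 1) + ((m : ℝ) + 1) * p * a (m + 1) - (m : ℝ) * p * a m with hc
  -- the double array
  set G : ℕ → ℕ → ℝ := fun n k =>
    a (n + 1) * ((n + 1).choose k : ℝ) * (p * z) ^ k * (1 - p) ^ (n + 1 - k) with hG
  have hGnn : ∀ n k, 0 ≤ G n k := fun n k =>
    mul_nonneg (mul_nonneg (mul_nonneg (hnonneg _) (Nat.cast_nonneg _))
      (pow_nonneg (mul_nonneg hp.le hz0) _)) (pow_nonneg h1p _)
  have hpz0 : 0 ≤ p * z + 1 - p := by nlinarith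
  have hpz1 : p * z + 1 - p ≤ 1 := by nlinarith
  -- row sums
  have row : ∀ n : ℕ, ∑' k : ℕ, G n k = a (n + 1) * (p * z + 1 - p) ^ (n + 1) := by
    intro n
    have hfin : ∑' k : ℕ, G n k = ∑ k ∈ Finset.range (n + 2), G n k := by
      refine tsum_eq_sum (fun k hk => ?_)
      have hlt : n + 1 < k := by simp [Finset.mem_range] at hk; omega
      simp [hG, Nat.choose_eq_zero_of_lt hlt]
    rw [hfin]
    have he : (p * z + 1 - p) ^ (n + 1) = (p * z + (1 - p)) ^ (n + 1) := by ring_nf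
    rw [he, add_pow, Finset.mul_sum]
    apply Finset.sum_congr rfl
    intro k _
    simp only [hG]
    ring
  have rowBound : Summable (fun n : ℕ => a (n + 1) * (p * z + 1 - p) ^ (n + 1)) := by
    refine Summable.of_nonneg_of_le
      (fun n => mul_nonneg (hnonneg _) (pow_nonneg hpz0 _)) (fun n => ?_) sA1
    have hb : (p * z + 1 - p) ^ (n + 1) ≤ 1 := pow_le_one₀ hpz0 hpz1
    calc a (n + 1) * (p * z + 1 - p) ^ (n + 1) ≤ a (n + 1) * 1 :=
          mul_le_mul_of_nonneg_left hb (hnonneg _)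
      _ = a (n + 1) := mul_one _
  -- summability of the double array
  have hGsum : Summable (Function.uncurry G) := by
    rw [summable_prod_of_nonneg (f := Function.uncurry G) (fun q => hGnn q.1 q.2)]
    constructor
    · intro n
      refine summable_of_ne_finset_zero (s := Finset.range (n + 2)) (fun k hk => ?_)
      have hlt : n + 1 < k := by simp [Finset.mem_range] at hk; omega
      simp [hG, Nat.choose_eq_zero_of_lt hlt]
    · have e : (fun n => ∑' k : ℕ, Function.uncurry G (n, k)) =
          fun n => a (n + 1) * (p * z + 1 - p) ^ (n + 1) :=
        funext fun n => (tsum_congr fun k => rfl).trans (row n)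
      rw [e]
      exact rowBound
  have hcolSummable : ∀ k : ℕ, Summable (fun n => G n k) := by
    intro k
    have h := hGsum.prod_symm.prod_factor k
    exact h.congr (fun n => rfl)
  -- column sums, k = 0
  have col0 : ∑' n : ℕ, G n 0 = ∑' j : ℕ, a (j + 1) * (1 - p) ^ (j + 1) := by
    apply tsum_congr
    intro n
    simp [hG]
  -- column sums, k = m+1
  have colk : ∀ m : ℕ, ∑' n : ℕ, G n (m + 1) = c m * z ^ (m + 1) := by
    intro m
    -- shift the index by m
    have hshift : ∑' j : ℕ, G (j + m) (m + 1) = ∑' n : ℕ, G n (m + 1) := by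
      refine Function.Injective.tsum_eq (g := fun j => j + m) (add_left_injective m)
        (f := fun n => G n (m + 1)) ?_
      intro x hx
      simp only [Function.mem_support] at hx
      rcases le_or_gt m x with h | h
      · exact ⟨x - m, show x - m + m = x by omega⟩
      · exact absurd (by simp [hG, Nat.choose_eq_zero_of_lt (by omega : x + 1 < m + 1)]) hx
    have hsumShift : Summable (fun j : ℕ => G (j + m) (m + 1)) := by
      have h := (hcolSummable (m + 1)).comp_injective (add_left_injective m)
      exact h.congr (fun j => rfl)
    rw [← hshift, Summable.tsum_eq_zero_add hsumShift]
    have h0 : G (0 + m) (m + 1) = a (m + 1) * p ^ (m + 1) * z ^ (m + 1) := by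
      simp [hG, Nat.choose_self, mul_pow]
      ring
    have htail : ∀ j : ℕ, G (j + 1 + m) (m + 1) =
        z ^ (m + 1) * (a ((m + 1) + 1 + j) * (((m + 1) + 1 + j).choose (m + 1) : ℝ) *
          p ^ (m + 1) * (1 - p) ^ (j + 1)) := by
      intro j
      have e1 : j + 1 + m + 1 = (m + 1) + 1 + j := by omega
      simp only [hG]
      rw [e1]
      have e2 : (m + 1) + 1 + j - (m + 1) = j + 1 := by omega
      rw [e2, mul_pow]
      ring
    rw [tsum_congr htail, tsum_mul_left]
    -- apply the eigenvalue equation at k = m+1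
    have he := heig (m + 1) (by omega)
    have hm1 : (m + 1) - 1 = m := by omega
    rw [hm1] at he
    push_cast at he
    have hS' : (∑' j : ℕ, a ((m + 1) + 1 + j) * (((m + 1) + 1 + j).choose (m + 1) : ℝ) *
        p ^ (m + 1) * (1 - p) ^ (j + 1)) =
        a (m + 1) * (1 - lam + ((m : ℝ) + 1) * p - p ^ (m + 1)) - a m * (m : ℝ) * p := by
      linarith
    rw [hS', h0, hc]
    ring
  -- assemble the LHS
  have hswap : ∑' n : ℕ, ∑' k : ℕ, G n k = ∑' k : ℕ, ∑' n : ℕ, G n k :=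
    (Summable.tsum_comm hGsum).symm
  have sCol : Summable (fun k : ℕ => ∑' n : ℕ, G n k) := by
    have hswapSum : Summable (fun q : ℕ × ℕ => G q.2 q.1) := by
      have h := hGsum.prod_symm
      exact h.congr (fun q => rfl)
    have h := ((summable_prod_of_nonneg (f := fun q : ℕ × ℕ => G q.2 q.1)
      (fun q => hGnn q.2 q.1)).mp hswapSum).2
    exact h.congr (fun k => rfl)
  have hLHS : (∑' j : ℕ, a (j + 1) * (p * z + 1 - p) ^ (j + 1)) =
      (∑' j : ℕ, a (j + 1) * (1 - p) ^ (j + 1)) + ∑' m : ℕ, c m * z ^ (m + 1) := by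
    rw [← tsum_congr row, hswap, Summable.tsum_eq_zero_add sCol, col0]
    congr 1
    exact tsum_congr colk
  -- assemble the RHS
  have key3 : ∑' j : ℕ, ((j : ℝ) * p * a j) * z ^ (j + 1) =
      p * z ^ 2 * ∑' j : ℕ, a (j + 1) * (((j : ℝ) + 1) * z ^ j) := by
    rw [Summable.tsum_eq_zero_add s3, ← tsum_mul_left]
    simp only [Nat.cast_zero, zero_mul, zero_add]
    apply tsum_congr
    intro j
    push_cast
    ring
  have hRHS : (1 - lam) * (∑' j : ℕ, a (j + 1) * z ^ (j + 1)) +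
      p * (z - z ^ 2) * (∑' j : ℕ, a (j + 1) * (((j : ℝ) + 1) * z ^ j)) =
      ∑' m : ℕ, c m * z ^ (m + 1) := by
    have expand : ∀ m : ℕ, c m * z ^ (m + 1) =
        (1 - lam) * (a (m + 1) * z ^ (m + 1)) +
          (p * z) * (a (m + 1) * (((m : ℝ) + 1) * z ^ m)) -
          ((m : ℝ) * p * a m) * z ^ (m + 1) := by
      intro m
      simp only [hc]
      ring
    rw [tsum_congr expand, Summable.tsum_sub ((sz.mul_left _).add (sdz.mul_left _)) s3,
      Summable.tsum_add (sz.mul_left _) (sdz.mul_left _), tsum_mul_left, tsum_mul_left, key3]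
    ring
  rw [hLHS, hderiv, ← hRHS]
  ring
end

section
/- Let 0 < p < 1 and let a = (a_k)_{k≥1} be a probability distribution on the positive integers with finite mean Σ k·a_k < ∞, which is a quasi-stationary distribution of Q with eigenvalue -λ (i.e., a left eigenvector of Q restricted to ℕ_{>0} with eigenvalue -λ). Then λ = 1 - 2p. -/
open Finset Filter Topology

lemma binom_mean (x y : ℝ) (j : ℕ) :
    ∑ k ∈ Finset.range (j+1), (k:ℝ) * (Nat.choose j k : ℝ) * x^k * y^(j-k)
      = (j:ℝ) * x * (x+y)^(j-1) := by
  cases j with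
  | zero => simp
  | succ n =>
    rw [Finset.sum_range_succ']
    have key : ∀ k : ℕ, ((k:ℝ)+1) * (Nat.choose (n+1) (k+1) : ℝ) = ((n:ℝ)+1) * (Nat.choose n k : ℝ) := by
      intro k
      have h0 : ((n+1) * Nat.choose n k : ℕ) = (Nat.choose (n+1) (k+1) * (k+1) : ℕ) :=
        Nat.add_one_mul_choose_eq n k
      have h1 := congrArg (fun m : ℕ => (m:ℝ)) h0
      push_cast at h1
      nlinarith [h1]
    have hc : ∀ k ∈ Finset.range (n+1),
        ((k+1 : ℕ):ℝ) * (Nat.choose (n+1) (k+1) : ℝ) * x^(k+1) * y^((n+1)-(k+1))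
          = ((n:ℝ)+1) * x * ((Nat.choose n k : ℝ) * x^k * y^(n-k)) := by
      intro k hk
      have h1 := key k
      have h2 : (n+1) - (k+1) = n - k := by omega
      rw [h2]
      push_cast
      push_cast at h1
      rw [pow_succ]
      linear_combination h1 * (x^k * x * y^(n-k))
    rw [Finset.sum_congr rfl hc, ← Finset.mul_sum]
    have hadd : (x+y)^n = ∑ k ∈ Finset.range (n+1), (Nat.choose n k : ℝ) * x^k * y^(n-k) := by
      rw [add_pow]
      exact Finset.sum_congr rfl (fun k hk => by ring)
    simp only [Nat.cast_zero, zero_mul, add_zero, ← hadd]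
    push_cast
    ring_nf

set_option maxHeartbeats 1000000 in
/-- If `a` is a probability distribution on the positive integers with finite mean
which is a quasi-stationary distribution of the generator `Q` with eigenvalue `-λ`,
then `λ = 1 - 2p`. -/
theorem stmt_3 (p lam : ℝ) (hp : 0 < p) (hp1 : p < 1)
    (a : ℕ → ℝ) (ha0 : a 0 = 0)
    (hnonneg : ∀ k, 0 ≤ a k)
    (hsum : ∑' k : ℕ, a k = 1)
    (hmean : Summable (fun k : ℕ => (k : ℝ) * a k))
    (hS : ∀ k : ℕ, Summable (fun j : ℕ =>
      a (k + 1 + j) * (Nat.choose (k + 1 + j) k : ℝ) * p ^ k * (1 - p) ^ (j + 1)))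
    (heig : ∀ k : ℕ, 1 ≤ k →
      a (k - 1) * ((k : ℝ) - 1) * p +
        (∑' j : ℕ, a (k + 1 + j) * (Nat.choose (k + 1 + j) k : ℝ) * p ^ k *
          (1 - p) ^ (j + 1)) -
        a k * (1 - lam + (k : ℝ) * p - p ^ k) = 0) :
    lam = 1 - 2 * p := by
  have hq : (0:ℝ) ≤ 1 - p := by linarith
  have hp0 : (0:ℝ) ≤ p := le_of_lt hp
  set b : ℕ → ℕ → ℝ := fun k j =>
    a (k + 1 + j) * (Nat.choose (k + 1 + j) k : ℝ) * p ^ k * (1 - p) ^ (j + 1) with hb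
  set S : ℕ → ℝ := fun k => ∑' j, b k j with hSdef
  set M : ℝ := ∑' k : ℕ, (k:ℝ) * a k with hMdef
  set P : ℝ := ∑' j : ℕ, (j:ℝ) * a j * p ^ j with hPdef
  -- basic summability / positivity facts
  have hsuma : Summable a := by
    by_contra h
    rw [tsum_eq_zero_of_not_summable h] at hsum
    norm_num at hsum
  have hmean_nonneg : ∀ k : ℕ, 0 ≤ (k:ℝ) * a k := fun k =>
    mul_nonneg (Nat.cast_nonneg k) (hnonneg k)
  have hM1 : (1:ℝ) ≤ M := by
    rw [hMdef, ← hsum]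
    refine Summable.tsum_le_tsum (fun k => ?_) hsuma hmean
    rcases Nat.eq_zero_or_pos k with rfl | hk
    · simp [ha0]
    · exact le_mul_of_one_le_left (hnonneg k) (by exact_mod_cast hk)
  have hPsum : Summable (fun j : ℕ => (j:ℝ) * a j * p ^ j) := by
    refine Summable.of_nonneg_of_le (fun j => ?_) (fun j => ?_) hmean
    · exact mul_nonneg (hmean_nonneg j) (pow_nonneg hp0 j)
    · calc (j:ℝ) * a j * p ^ j ≤ (j:ℝ) * a j * 1 := by
            refine mul_le_mul_of_nonneg_left ?_ (hmean_nonneg j)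
            exact pow_le_one₀ hp0 (le_of_lt hp1)
        _ = (j:ℝ) * a j := mul_one _
  -- the double-indexed function and its grouping bound
  set F : ℕ × ℕ → ℝ := fun x =>
    (x.1 : ℝ) * (a (x.1 + 1 + x.2) * (Nat.choose (x.1 + 1 + x.2) x.1 : ℝ) *
      p ^ x.1 * (1 - p) ^ (x.2 + 1)) with hF
  have hFnonneg : ∀ x, 0 ≤ F x := by
    intro x
    exact mul_nonneg (Nat.cast_nonneg _) (mul_nonneg (mul_nonneg (mul_nonneg (hnonneg _)
      (Nat.cast_nonneg _)) (pow_nonneg hp0 _)) (pow_nonneg hq _))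
  -- binomial sum with p, 1-p
  have hbinomial : ∀ j : ℕ,
      ∑ k ∈ Finset.range (j+1), (k:ℝ) * (Nat.choose j k : ℝ) * p^k * (1-p)^(j-k)
        = (j:ℝ) * p := by
    intro j
    rw [binom_mean p (1-p) j]
    norm_num
  have hFbound : ∀ u : Finset (ℕ × ℕ), ∑ x ∈ u, F x ≤ p * M := by
    intro u
    have hmap : ∀ x ∈ u, (fun x : ℕ × ℕ => x.1 + 1 + x.2) x ∈
        u.image (fun x : ℕ × ℕ => x.1 + 1 + x.2) := fun x hx => Finset.mem_image_of_mem _ hx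
    rw [← Finset.sum_fiberwise_of_maps_to hmap F]
    have hinner : ∀ j ∈ u.image (fun x : ℕ × ℕ => x.1 + 1 + x.2),
        ∑ x ∈ u.filter (fun x : ℕ × ℕ => x.1 + 1 + x.2 = j), F x ≤ p * ((j:ℝ) * a j) := by
      intro j _
      set s := u.filter (fun x : ℕ × ℕ => x.1 + 1 + x.2 = j) with hs
      have hmem : ∀ x ∈ s, x.1 + 1 + x.2 = j := by
        intro x hx
        exact (Finset.mem_filter.1 hx).2
      have hinj : ∀ x ∈ s, ∀ y ∈ s, x.1 = y.1 → x = y := by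
        intro x hx y hy hxy
        have h1 := hmem x hx
        have h2 := hmem y hy
        have : x.2 = y.2 := by omega
        exact Prod.ext hxy this
      have heq : ∑ x ∈ s, F x
          = ∑ k ∈ s.image Prod.fst,
              a j * ((k:ℝ) * (Nat.choose j k : ℝ) * p ^ k * (1-p) ^ (j-k)) := by
        rw [Finset.sum_image hinj]
        refine Finset.sum_congr rfl fun x hx => ?_
        have h1 := hmem x hx
        have h2 : j - x.1 = x.2 + 1 := by omega
        simp only [hF]
        rw [← h1, show x.1 + 1 + x.2 - x.1 = x.2 + 1 from by omega] at h2 ⊢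
        rw [h2]
        ring
      rw [heq]
      have hsub : s.image Prod.fst ⊆ Finset.range (j+1) := by
        intro k hk
        obtain ⟨x, hx, rfl⟩ := Finset.mem_image.1 hk
        have := hmem x hx
        exact Finset.mem_range.2 (by omega)
      have hle : ∑ k ∈ s.image Prod.fst,
            a j * ((k:ℝ) * (Nat.choose j k : ℝ) * p ^ k * (1-p) ^ (j-k))
          ≤ ∑ k ∈ Finset.range (j+1),
            a j * ((k:ℝ) * (Nat.choose j k : ℝ) * p ^ k * (1-p) ^ (j-k)) := by
        refine Finset.sum_le_sum_of_subset_of_nonneg hsub fun k _ _ => ?_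
        exact mul_nonneg (hnonneg j) (mul_nonneg (mul_nonneg (mul_nonneg (Nat.cast_nonneg _)
          (Nat.cast_nonneg _)) (pow_nonneg hp0 _)) (pow_nonneg hq _))
      refine hle.trans ?_
      rw [← Finset.mul_sum, hbinomial j]
      have := hnonneg j
      nlinarith [hnonneg j]
    calc ∑ j ∈ u.image (fun x : ℕ × ℕ => x.1 + 1 + x.2),
          ∑ x ∈ u.filter (fun x : ℕ × ℕ => x.1 + 1 + x.2 = j), F x
        ≤ ∑ j ∈ u.image (fun x : ℕ × ℕ => x.1 + 1 + x.2), p * ((j:ℝ) * a j) :=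
          Finset.sum_le_sum hinner
      _ = p * ∑ j ∈ u.image (fun x : ℕ × ℕ => x.1 + 1 + x.2), (j:ℝ) * a j := by
          rw [Finset.mul_sum]
      _ ≤ p * M := by
          refine mul_le_mul_of_nonneg_left ?_ hp0
          exact Summable.sum_le_tsum _ (fun k _ => hmean_nonneg k) hmean
  have hFsum : Summable F := summable_of_sum_le hFnonneg hFbound
  -- first evaluation: tsum F = ∑' k, k * S k
  have hrow : ∀ k : ℕ, Summable (fun m => F (k, m)) := by
    intro k
    have h := (hS k).mul_left ((k:ℝ))
    simp only [hF]
    exact h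
  have hT1 : ∑' x, F x = ∑' k : ℕ, (k:ℝ) * S k := by
    rw [Summable.tsum_prod' hFsum hrow]
    refine tsum_congr fun k => ?_
    simp only [hF, hSdef, hb]
    exact tsum_mul_left
  have hTsummable : Summable (fun k : ℕ => (k:ℝ) * S k) := by
    have := ((summable_prod_of_nonneg hFnonneg).1 hFsum).2
    have he : (fun k : ℕ => ∑' m, F (k, m)) = fun k : ℕ => (k:ℝ) * S k := by
      funext k
      simp only [hF, hSdef, hb]
      exact tsum_mul_left
    rwa [he] at this
  -- second evaluation: tsum F = p * M - P
  have hBnonneg : ∀ j k : ℕ,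
      0 ≤ (k:ℝ) * (a j * (Nat.choose j k : ℝ) * p ^ k * (1-p) ^ (j-k)) := by
    intro j k
    exact mul_nonneg (Nat.cast_nonneg _) (mul_nonneg (mul_nonneg (mul_nonneg (hnonneg j)
      (Nat.cast_nonneg _)) (pow_nonneg hp0 _)) (pow_nonneg hq _))
  have hT2 : ∑' x, F x = p * M - P := by
    set G : ℕ × ℕ → ℝ := fun y =>
      if y.2 + 1 ≤ y.1 then
        (y.2:ℝ) * (a y.1 * (Nat.choose y.1 y.2 : ℝ) * p ^ y.2 * (1-p) ^ (y.1 - y.2))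
      else 0 with hG
    set ψ : ℕ × ℕ → ℕ × ℕ := fun x => (x.1 + 1 + x.2, x.1) with hψ
    have hψinj : Function.Injective ψ := by
      intro x y h
      simp only [hψ, Prod.mk.injEq] at h
      exact Prod.ext (by omega) (by omega)
    have hGψ : ∀ x, G (ψ x) = F x := by
      intro x
      simp only [hG, hψ, hF]
      rw [if_pos (by omega)]
      rw [show x.1 + 1 + x.2 - x.1 = x.2 + 1 from by omega]
    have hsupp : Function.support G ⊆ Set.range ψ := by
      intro y hy
      have hcond : y.2 + 1 ≤ y.1 := by
        by_contra h
        exact hy (by simp only [hG]; exact if_neg h)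
      exact ⟨(y.2, y.1 - y.2 - 1), Prod.ext (by simp [hψ]; omega) (by simp [hψ])⟩
    have hGsum : Summable G := by
      refine (Function.Injective.summable_iff hψinj
        (fun x hx => Function.notMem_support.1 fun hs => hx (hsupp hs))).1 ?_
      have : G ∘ ψ = F := funext hGψ
      rwa [this]
    have h1 : ∑' x, F x = ∑' y, G y := by
      rw [← Function.Injective.tsum_eq hψinj hsupp]
      exact tsum_congr fun x => (hGψ x).symm
    have hGrow : ∀ j : ℕ, ∀ k ∉ Finset.range j, G (j, k) = 0 := by
      intro j k hk
      rw [Finset.mem_range, not_lt] at hk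
      exact if_neg (by omega)
    have h2 : ∑' y, G y = ∑' j : ℕ, ∑' k : ℕ, G (j, k) :=
      Summable.tsum_prod' hGsum (fun j => summable_of_ne_finset_zero (hGrow j))
    have h3 : ∀ j : ℕ, ∑' k : ℕ, G (j, k) = p * ((j:ℝ) * a j) - (j:ℝ) * a j * p ^ j := by
      intro j
      rw [tsum_eq_sum (hGrow j)]
      have hterm : ∀ k ∈ Finset.range j, G (j, k)
          = a j * ((k:ℝ) * (Nat.choose j k : ℝ) * p ^ k * (1-p) ^ (j-k)) := by
        intro k hk
        rw [Finset.mem_range] at hk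
        simp only [hG]
        rw [if_pos (by omega)]
        ring
      rw [Finset.sum_congr rfl hterm, ← Finset.mul_sum]
      have hfull := hbinomial j
      rw [Finset.sum_range_succ] at hfull
      have hlast : (j:ℝ) * (Nat.choose j j : ℝ) * p ^ j * (1-p) ^ (j-j)
          = (j:ℝ) * p ^ j := by
        simp [Nat.choose_self]
      rw [hlast] at hfull
      have hsumval : ∑ k ∈ Finset.range j,
          (k:ℝ) * (Nat.choose j k : ℝ) * p ^ k * (1-p) ^ (j-k)
            = (j:ℝ) * p - (j:ℝ) * p ^ j := by linarith
      rw [hsumval]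
      ring
    rw [h1, h2, tsum_congr h3, Summable.tsum_sub (hmean.mul_left p) hPsum, tsum_mul_left]
  -- the per-k identity from the eigen-equation
  set d : ℕ → ℝ := fun k => p * (k:ℝ) * ((k:ℝ)+1) * a k with hd
  have hident : ∀ k : ℕ, (k:ℝ) * S k
      = ((1 - lam - p) * ((k:ℝ) * a k) - (k:ℝ) * a k * p ^ k) + (d k - d (k-1)) := by
    intro k
    cases k with
    | zero => norm_num [hd]
    | succ n =>
      have h := heig (n+1) (by omega)
      simp only [Nat.add_sub_cancel] at h
      simp only [hSdef, hb, hd, Nat.add_sub_cancel]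
      push_cast at h ⊢
      linear_combination ((n:ℝ)+1) * h
  -- partial sums, telescoping
  have hpartial : ∀ N : ℕ,
      ∑ k ∈ Finset.range (N+1), (k:ℝ) * S k
        = ∑ k ∈ Finset.range (N+1), ((1 - lam - p) * ((k:ℝ) * a k) - (k:ℝ) * a k * p ^ k)
          + d N := by
    intro N
    rw [Finset.sum_congr rfl (fun k _ => hident k), Finset.sum_add_distrib]
    congr 1
    rw [Finset.sum_range_succ']
    simp only [Nat.zero_sub, Nat.cast_zero, sub_self, add_zero]
    have : ∀ k : ℕ, d (k+1) - d ((k+1)-1) = d (k+1) - d k := by intro k; norm_num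
    rw [Finset.sum_congr rfl (fun k _ => this k), Finset.sum_range_sub d N]
    simp [hd]
  -- limits
  have hcomb : Summable (fun k : ℕ => (1 - lam - p) * ((k:ℝ) * a k) - (k:ℝ) * a k * p ^ k) :=
    (hmean.mul_left _).sub hPsum
  have hcombsum : ∑' k : ℕ, ((1 - lam - p) * ((k:ℝ) * a k) - (k:ℝ) * a k * p ^ k)
      = (1 - lam - p) * M - P := by
    rw [Summable.tsum_sub (hmean.mul_left _) hPsum, tsum_mul_left]
  have hTval : ∑' k : ℕ, (k:ℝ) * S k = p * M - P := by rw [← hT1]; exact hT2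
  have hdlim : Tendsto d atTop (𝓝 ((p * M - P) - ((1 - lam - p) * M - P))) := by
    have t1 : Tendsto (fun N : ℕ => ∑ k ∈ Finset.range (N+1), (k:ℝ) * S k) atTop
        (𝓝 (p * M - P)) := by
      have h := hTsummable.hasSum.tendsto_sum_nat
      rw [hTval] at h
      exact h.comp (tendsto_add_atTop_nat 1)
    have t2 : Tendsto (fun N : ℕ => ∑ k ∈ Finset.range (N+1),
        ((1 - lam - p) * ((k:ℝ) * a k) - (k:ℝ) * a k * p ^ k)) atTop
        (𝓝 ((1 - lam - p) * M - P)) := by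
      have h := hcomb.hasSum.tendsto_sum_nat
      rw [hcombsum] at h
      exact h.comp (tendsto_add_atTop_nat 1)
    have hdeq : d = fun N : ℕ => (∑ k ∈ Finset.range (N+1), (k:ℝ) * S k)
        - ∑ k ∈ Finset.range (N+1), ((1 - lam - p) * ((k:ℝ) * a k) - (k:ℝ) * a k * p ^ k) := by
      funext N
      rw [hpartial N]
      ring
    rw [hdeq]
    exact t1.sub t2
  have hL : (p * M - P) - ((1 - lam - p) * M - P) = 0 := by
    set L : ℝ := (p * M - P) - ((1 - lam - p) * M - P) with hLdef
    have hdnonneg : ∀ N : ℕ, 0 ≤ d N := by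
      intro N
      exact mul_nonneg (mul_nonneg (mul_nonneg hp0 (Nat.cast_nonneg _))
        (by positivity)) (hnonneg N)
    have hL0 : 0 ≤ L := ge_of_tendsto hdlim (Filter.Eventually.of_forall hdnonneg)
    rcases eq_or_lt_of_le hL0 with h | hLpos
    · exact h.symm
    exfalso
    have hev : ∀ᶠ N in atTop, L/2 < d N :=
      hdlim.eventually (eventually_gt_nhds (by linarith : L/2 < L))
    obtain ⟨N₀, hN₀⟩ := Filter.eventually_atTop.1 hev
    have hbound : ∀ n : ℕ, 1 / (((n + N₀ : ℕ):ℝ) + 1)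
        ≤ (2 * p / L) * (((n + N₀ : ℕ):ℝ) * a (n + N₀)) := by
      intro n
      have hd2 := hN₀ (n + N₀) (Nat.le_add_left _ _)
      simp only [hd] at hd2
      set N : ℕ := n + N₀
      have hN1 : (0:ℝ) < (N:ℝ) + 1 := by positivity
      rw [div_le_iff₀ hN1, div_mul_eq_mul_div, div_mul_eq_mul_div,
        le_div_iff₀ hLpos, one_mul]
      nlinarith [hd2]
    have hsummable1 : Summable (fun n : ℕ => 1 / (((n + N₀ : ℕ):ℝ) + 1)) := by
      refine Summable.of_nonneg_of_le (fun n => by positivity) hbound ?_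
      exact ((summable_nat_add_iff N₀).2 hmean).mul_left _
    have hsummable2 : Summable (fun n : ℕ => 1 / ((n:ℝ) + 1)) :=
      (summable_nat_add_iff N₀).1 (by exact_mod_cast hsummable1)
    have hsummable3 : Summable (fun n : ℕ => 1 / ((n:ℕ):ℝ)) := by
      refine (summable_nat_add_iff 1).1 ?_
      have : (fun n : ℕ => 1 / (((n + 1 : ℕ)):ℝ)) = fun n : ℕ => 1 / ((n:ℝ) + 1) := by
        funext n
        push_cast
        ring
      rwa [this]
    exact Real.not_summable_one_div_natCast hsummable3
  -- conclude
  have hM0 : (0:ℝ) < M := lt_of_lt_of_le one_pos hM1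
  have : p * M = (1 - lam - p) * M := by linarith
  have : p = 1 - lam - p := mul_right_cancel₀ (ne_of_gt hM0) this
  linarith
end

section
/- Let 0 < p < 1/2. The sequence x_k = k (for k ≥ 1) satisfies, for every j ≥ 1, the eigenvector equation jp·x_{j+1} - (jp+1)·x_j + Σ_{k=1}^{j} C(j,k)·p^k·(1-p)^{j-k}·x_k = (2p-1)·x_j. Moreover, any positive sequence (x_k)_{k≥1} satisfying these equations equals (r·k)_{k≥1} for some r > 0. -/
lemma key_sum (p : ℝ) (m : ℕ) :
    ∑ k ∈ Finset.Icc 1 (m+1), (Nat.choose (m+1) k : ℝ) * p ^ k * (1 - p) ^ (m+1-k) * k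
      = ((m:ℝ)+1) * p := by
  rw [← Finset.Ico_add_one_right_eq_Icc, Finset.sum_Ico_eq_sum_range]
  have h1 : ((m:ℝ)+1) * p = ((m:ℝ)+1) * p * ((p + (1-p)) ^ m) := by
    norm_num
  rw [h1, add_pow, Finset.mul_sum]
  apply Finset.sum_congr rfl
  intro i hi
  simp only [Finset.mem_range] at hi
  have h2 : m + 1 - (1 + i) = m - i := by omega
  have h3 := Nat.add_one_mul_choose_eq m i
  have h3' : ((m:ℝ)+1) * (Nat.choose m i : ℝ) = (Nat.choose (m+1) (i+1) : ℝ) * ((i:ℝ)+1) := by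
    exact_mod_cast congrArg (Nat.cast : ℕ → ℝ) h3
  rw [h2, show 1 + i = i + 1 from by omega]
  push_cast
  linear_combination -(p ^ (i + 1) * (1 - p) ^ (m - i)) * h3'

lemma key_sum' (p : ℝ) (j : ℕ) (hj : 1 ≤ j) :
    ∑ k ∈ Finset.Icc 1 j, (Nat.choose j k : ℝ) * p ^ k * (1 - p) ^ (j-k) * k
      = (j:ℝ) * p := by
  obtain ⟨m, rfl⟩ := Nat.exists_eq_add_of_le hj
  rw [add_comm 1 m]
  have := key_sum p m
  push_cast at this ⊢
  convert this using 2



/-- For `0 < p < 1/2`, the sequence `x_k = k` satisfies the `(1-2p)`-invariant-vector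
equations for the generator `Q`, and any positive solution is `(r·k)` for some `r > 0`. -/
theorem stmt_4 (p : ℝ) (hp : 0 < p) (hp2 : p < 1/2) :
    (∀ j : ℕ, 1 ≤ j →
      (j : ℝ) * p * ((j : ℝ) + 1) - ((j : ℝ) * p + 1) * (j : ℝ) +
        ∑ k ∈ Finset.Icc 1 j, (Nat.choose j k : ℝ) * p ^ k * (1 - p) ^ (j - k) * (k : ℝ)
        = (2 * p - 1) * (j : ℝ)) ∧
    ∀ x : ℕ → ℝ, (∀ k : ℕ, 1 ≤ k → 0 < x k) →
      (∀ j : ℕ, 1 ≤ j →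
        (j : ℝ) * p * x (j + 1) - ((j : ℝ) * p + 1) * x j +
          ∑ k ∈ Finset.Icc 1 j, (Nat.choose j k : ℝ) * p ^ k * (1 - p) ^ (j - k) * x k
          = (2 * p - 1) * x j) →
      ∃ r : ℝ, 0 < r ∧ ∀ k : ℕ, 1 ≤ k → x k = r * (k : ℝ) := by
  constructor
  · intro j hj
    rw [key_sum' p j hj]
    ring
  · intro x hpos heq
    refine ⟨x 1, hpos 1 le_rfl, ?_⟩
    have main : ∀ j : ℕ, 1 ≤ j → ∀ k : ℕ, 1 ≤ k → k ≤ j → x k = x 1 * k := by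
      intro j hj1
      induction j, hj1 using Nat.le_induction with
      | base =>
        intro k hk1 hk2
        have : k = 1 := le_antisymm hk2 hk1
        subst this; simp
      | succ j hj ih =>
        intro k hk1 hk2
        rcases Nat.lt_or_ge k (j+1) with h | h
        · exact ih k hk1 (by omega)
        · have hkj : k = j + 1 := le_antisymm hk2 h
          subst hkj
          have E := heq j hj
          have hsum : ∑ k ∈ Finset.Icc 1 j, (Nat.choose j k : ℝ) * p ^ k * (1 - p) ^ (j - k) * x k
              = x 1 * ((j:ℝ) * p) := by
            rw [← key_sum' p j hj, Finset.mul_sum]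
            apply Finset.sum_congr rfl
            intro k hk
            simp only [Finset.mem_Icc] at hk
            rw [ih k hk.1 hk.2]
            ring
          rw [hsum, ih j hj le_rfl] at E
          have hjp : (j:ℝ) * p ≠ 0 := by
            have : (1:ℝ) ≤ (j:ℝ) := by exact_mod_cast hj
            positivity
          have : (j:ℝ) * p * x (j+1) = (j:ℝ) * p * (x 1 * ((j:ℝ)+1)) := by
            nlinarith [E]
          have := mul_left_cancel₀ hjp this
          rw [this]
          push_cast
          ring
    intro k hk
    exact main k hk k hk le_rfl
end

section
/- Let 0 < p < 1/2 and define the matrix Q̄ on the positive integers by q̄_{j,k} = C(j-1,k-1)·p^k·(1-p)^{j-k} for 1 ≤ k < j, q̄_{j,j+1} = (j+1)p, and q̄_{j,j} = p^j - (2+j)p. Then each row of Q̄ sums to zero, i.e., Q̄ is a valid generator matrix of a continuous-time Markov chain. -/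
/-- The (1-2p)-dual generator Q̄ of the degree-process generator. -/
noncomputable def qbar (p : ℝ) (j k : ℕ) : ℝ :=
  if 1 ≤ k ∧ k < j then (Nat.choose (j - 1) (k - 1) : ℝ) * p ^ k * (1 - p) ^ (j - k)
  else if k = j + 1 then ((j : ℝ) + 1) * p
  else if k = j then p ^ j - (2 + (j : ℝ)) * p
  else 0

lemma binom_sum (p : ℝ) (n : ℕ) :
    ∑ m ∈ Finset.range (n + 1), (n.choose m : ℝ) * p ^ m * (1 - p) ^ (n - m) = 1 := by
  have h := add_pow p (1 - p) n
  simp only [add_sub_cancel, one_pow] at h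
  conv_rhs => rw [h]
  exact Finset.sum_congr rfl fun m _ => by ring

/-- For `0 < p < 1/2`, each row of `Q̄` sums to zero, so `Q̄` is a valid generator
matrix of a continuous-time Markov chain on the positive integers. -/
theorem stmt_6 (p : ℝ) (hp : 0 < p) (hp2 : p < 1/2) :
    ∀ j : ℕ, 1 ≤ j → ∑' k : ℕ, qbar p j k = 0 := by
  intro j hj
  obtain ⟨n, rfl⟩ : ∃ n, j = n + 1 := ⟨j - 1, by omega⟩
  rw [tsum_eq_sum (s := Finset.range (n + 3)) (by
    intro k hk
    simp only [Finset.mem_range, not_lt] at hk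
    unfold qbar
    rw [if_neg (by omega), if_neg (by omega), if_neg (by omega)])]
  rw [show n + 3 = (n + 1) + 1 + 1 by ring, Finset.sum_range_succ, Finset.sum_range_succ]
  have hlast : qbar p (n + 1) (n + 2) = ((n : ℝ) + 2) * p := by
    unfold qbar
    rw [if_neg (by omega), if_pos (by omega)]
    push_cast; ring
  have hdiag : qbar p (n + 1) (n + 1) = p ^ (n + 1) - ((n : ℝ) + 3) * p := by
    unfold qbar
    rw [if_neg (by omega), if_neg (by omega), if_pos rfl]
    push_cast; ring
  have hmain : ∑ k ∈ Finset.range (n + 1), qbar p (n + 1) k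
      = p * (1 - p ^ n) := by
    rw [Finset.sum_range_succ']
    have h0 : qbar p (n + 1) 0 = 0 := by
      unfold qbar
      rw [if_neg (by omega), if_neg (by omega), if_neg (by omega)]
    rw [h0, add_zero]
    have hterm : ∀ i ∈ Finset.range n, qbar p (n + 1) (i + 1)
        = p * ((n.choose i : ℝ) * p ^ i * (1 - p) ^ (n - i)) := by
      intro i hi
      simp only [Finset.mem_range] at hi
      unfold qbar
      rw [if_pos (by omega)]
      have h1 : n + 1 - 1 = n := by omega
      have h2 : i + 1 - 1 = i := by omega
      have h3 : n + 1 - (i + 1) = n - i := by omega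
      rw [h1, h2, h3]
      ring
    rw [Finset.sum_congr rfl hterm, ← Finset.mul_sum]
    have hsum : ∑ i ∈ Finset.range n, (n.choose i : ℝ) * p ^ i * (1 - p) ^ (n - i)
        = 1 - p ^ n := by
      have h := binom_sum p n
      rw [Finset.sum_range_succ] at h
      simp only [Nat.choose_self, Nat.cast_one, Nat.sub_self, pow_zero] at h
      linarith
    rw [hsum]
  rw [hmain, hdiag, hlast]
  ring
end

section
/- Let 0 < p < e^{-1} and q > 0 satisfy -1 + q + p^q < 0. Let V(x) = x^q and define ΔV(x) = p·(x+1)·V(x+1) - p·(x+2)·V(x) + p·E[V(1+Y_x)] where Y_x ~ Binomial(x-1, p). Then ΔV(x)/(p·(x+1)^q) → -1 + q + p^q as x → ∞. -/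
open Filter unitInterval

private lemma stmt7_rpow_sub_le (q : ℝ) (hq0 : 0 ≤ q) (hq1 : q ≤ 1) {a b : ℝ}
    (hb : 0 ≤ b) (hba : b ≤ a) : a ^ q - b ^ q ≤ (a - b) ^ q := by
  have ha : 0 ≤ a := hb.trans hba
  have hab : 0 ≤ a - b := sub_nonneg.mpr hba
  have h := NNReal.rpow_add_le_add_rpow (Real.toNNReal (a - b)) (Real.toNNReal b) hq0 hq1
  have hsum : Real.toNNReal (a - b) + Real.toNNReal b = Real.toNNReal a := by
    rw [← Real.toNNReal_add hab hb]; ring_nf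
  rw [hsum] at h
  have h' := NNReal.coe_le_coe.mpr h
  push_cast [NNReal.coe_rpow, Real.coe_toNNReal _ ha, Real.coe_toNNReal _ hab,
    Real.coe_toNNReal _ hb] at h'
  linarith

private lemma stmt7_abs_rpow_sub_rpow_le (q : ℝ) (hq0 : 0 ≤ q) (hq1 : q ≤ 1) {a b : ℝ}
    (ha : 0 ≤ a) (hb : 0 ≤ b) : |a ^ q - b ^ q| ≤ |a - b| ^ q := by
  rcases le_total b a with h | h
  · rw [abs_of_nonneg (sub_nonneg.mpr (Real.rpow_le_rpow hb h hq0)),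
      abs_of_nonneg (sub_nonneg.mpr h)]
    exact stmt7_rpow_sub_le q hq0 hq1 hb h
  · rw [abs_sub_comm, abs_sub_comm a b,
      abs_of_nonneg (sub_nonneg.mpr (Real.rpow_le_rpow ha h hq0)),
      abs_of_nonneg (sub_nonneg.mpr h)]
    exact stmt7_rpow_sub_le q hq0 hq1 ha h

private lemma stmt7_partA (q : ℝ) (hq : 0 < q) :
    Tendsto (fun x : ℕ => ((x : ℝ) + 1) - ((x : ℝ) + 2) * ((x : ℝ) ^ q / ((x : ℝ) + 1) ^ q))
      atTop (nhds (q - 1)) := by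
  set g : ℝ → ℝ := fun u => (1 - u) ^ q with hgdef
  have hg : HasDerivAt g (-q) 0 := by
    have h1 : HasDerivAt (fun u : ℝ => u ^ q) (q * (1 : ℝ) ^ (q - 1)) 1 :=
      Real.hasDerivAt_rpow_const (Or.inl one_ne_zero)
    have h2 : HasDerivAt (fun u : ℝ => 1 - u) (-1) 0 := (hasDerivAt_id 0).const_sub 1
    have h1' : HasDerivAt (fun u : ℝ => u ^ q) (q * (1 : ℝ) ^ (q - 1)) ((fun u : ℝ => 1 - u) 0) := by
      simpa using h1
    have := h1'.comp 0 h2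
    simpa [Real.one_rpow, Function.comp_def] using this
  set t : ℕ → ℝ := fun x => ((x : ℝ) + 1)⁻¹ with htdef
  have ht0 : Tendsto t atTop (nhds 0) := by
    simpa [htdef, one_div] using tendsto_one_div_add_atTop_nhds_zero_nat (𝕜 := ℝ)
  have ht : Tendsto t atTop (nhdsWithin 0 {(0:ℝ)}ᶜ) := by
    apply tendsto_nhdsWithin_of_tendsto_nhds_of_eventually_within _ ht0
    filter_upwards with x
    have : (0:ℝ) < (x : ℝ) + 1 := by positivity
    simp [htdef]
    positivity
  have hslope : Tendsto (fun x : ℕ => slope g 0 (t x)) atTop (nhds (-q)) :=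
    (hasDerivAt_iff_tendsto_slope.mp hg).comp ht
  have hgt : Tendsto (fun x : ℕ => g (t x)) atTop (nhds 1) := by
    have := hg.continuousAt.tendsto.comp ht0
    simpa [hgdef, Function.comp_def] using this
  have key : Tendsto (fun x : ℕ => -(slope g 0 (t x)) - g (t x)) atTop (nhds (q - 1)) := by
    have := hslope.neg.sub hgt
    simpa using this
  apply key.congr
  intro x
  have hx1 : (0:ℝ) < (x : ℝ) + 1 := by positivity
  have hxq : (x : ℝ) ^ q / ((x : ℝ) + 1) ^ q = ((x : ℝ) / ((x : ℝ) + 1)) ^ q := by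
    rw [Real.div_rpow (by positivity) hx1.le]
  have hgx : g (t x) = ((x : ℝ) / ((x : ℝ) + 1)) ^ q := by
    simp only [hgdef, htdef]
    congr 1
    field_simp
    ring
  have hsl : slope g 0 (t x) = (g (t x) - 1) / t x := by
    rw [slope_def_field]
    simp [hgdef, Real.one_rpow]
  rw [hsl, hxq, ← hgx]
  have htx : t x ≠ 0 := by simp [htdef]; positivity
  field_simp [htdef]
  have htx1 : t x * ((x : ℝ) + 1) = 1 := by
    simp only [htdef]; exact inv_mul_cancel₀ hx1.ne'
  linear_combination (g (t x) - 1) * htx1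

private lemma stmt7_bern_tendsto (p q : ℝ) (hp : 0 < p) (hp1 : p < 1) (hq : 0 < q) :
    Tendsto (fun n : ℕ => ∑ k ∈ Finset.range (n + 1),
        ((k : ℝ) / (n : ℝ)) ^ q * ((Nat.choose n k : ℝ) * p ^ k * (1 - p) ^ (n - k)))
      atTop (nhds (p ^ q)) := by
  have hcont : Continuous fun t : I => (t : ℝ) ^ q :=
    (continuous_iff_continuousAt.mpr fun x =>
      Real.continuousAt_rpow_const x q (Or.inr hq.le)).comp continuous_subtype_val
  set f : C(I, ℝ) := ⟨fun t : I => (t : ℝ) ^ q, hcont⟩ with hf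
  set pI : I := ⟨p, ⟨hp.le, hp1.le⟩⟩ with hpI
  have heval : Tendsto (fun n : ℕ => bernsteinApproximation n f pI) atTop (nhds (f pI)) :=
    ((continuous_eval_const pI).tendsto f).comp (bernsteinApproximation_uniform f)
  have hfp : f pI = p ^ q := rfl
  rw [hfp] at heval
  apply heval.congr
  intro n
  rw [bernsteinApproximation, ContinuousMap.sum_apply,
    ← Fin.sum_univ_eq_sum_range (fun k =>
      ((k : ℝ) / (n : ℝ)) ^ q * ((Nat.choose n k : ℝ) * p ^ k * (1 - p) ^ (n - k)))]
  exact Finset.sum_congr rfl fun k _ => by simp [bernstein.z, hf, hpI, bernstein_apply]; ring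

private lemma stmt7_wsum (p : ℝ) (n : ℕ) :
    ∑ k ∈ Finset.range (n + 1), (Nat.choose n k : ℝ) * p ^ k * (1 - p) ^ (n - k) = 1 := by
  have h := add_pow p (1 - p) n
  simp only [add_sub_cancel, one_pow] at h
  have h2 : ∑ k ∈ Finset.range (n + 1), (Nat.choose n k : ℝ) * p ^ k * (1 - p) ^ (n - k)
      = ∑ m ∈ Finset.range (n + 1), p ^ m * (1 - p) ^ (n - m) * (Nat.choose n m : ℝ) :=
    Finset.sum_congr rfl fun k _ => by ring
  rw [h2, ← h]

private lemma stmt7_node_bound (n k : ℕ) (hk : k ≤ n) :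
    |(1 + (k : ℝ)) / ((n : ℝ) + 2) - (k : ℝ) / (n : ℝ)| ≤ 1 / ((n : ℝ) + 2) := by
  rcases Nat.eq_zero_or_pos n with hn | hn
  · subst hn
    interval_cases k
    norm_num [abs_of_nonneg]
  · have hn0 : (0 : ℝ) < n := by exact_mod_cast hn
    have hn2 : (0 : ℝ) < (n : ℝ) + 2 := by positivity
    have hk' : (k : ℝ) ≤ n := by exact_mod_cast hk
    rw [div_sub_div _ _ hn2.ne' hn0.ne', abs_div, abs_of_pos (mul_pos hn2 hn0),
      div_le_div_iff₀ (mul_pos hn2 hn0) hn2]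
    have h1 : |(1 + (k : ℝ)) * n - ((n : ℝ) + 2) * (k : ℝ)| = |(n : ℝ) - 2 * k| := by
      congr 1; ring
    rw [h1]
    have h2 : |(n : ℝ) - 2 * k| ≤ n := by
      rw [abs_le]
      constructor <;> nlinarith
    nlinarith

private lemma stmt7_partD (p q : ℝ) (hp : 0 < p) (hp1 : p < 1) (hq : 0 < q) (hq1 : q ≤ 1) :
    Tendsto (fun n : ℕ => ∑ k ∈ Finset.range (n + 1),
        (Nat.choose n k : ℝ) * p ^ k * (1 - p) ^ (n - k) * ((1 + (k : ℝ)) / ((n : ℝ) + 2)) ^ q)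
      atTop (nhds (p ^ q)) := by
  set Bern : ℕ → ℝ := fun n => ∑ k ∈ Finset.range (n + 1),
    ((k : ℝ) / (n : ℝ)) ^ q * ((Nat.choose n k : ℝ) * p ^ k * (1 - p) ^ (n - k)) with hBern
  set D : ℕ → ℝ := fun n => ∑ k ∈ Finset.range (n + 1),
    (Nat.choose n k : ℝ) * p ^ k * (1 - p) ^ (n - k) * ((1 + (k : ℝ)) / ((n : ℝ) + 2)) ^ q with hD
  have hdiff : Tendsto (fun n => D n - Bern n) atTop (nhds 0) := by
    have hb2 : Tendsto (fun n : ℕ => (1 / ((n : ℝ) + 2)) ^ q) atTop (nhds 0) := by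
      have hb : Tendsto (fun n : ℕ => 1 / ((n : ℝ) + 2)) atTop (nhds 0) := by
        exact tendsto_const_nhds.div_atTop
          (tendsto_atTop_add_const_right _ 2 tendsto_natCast_atTop_atTop)
      have hc := (Real.continuousAt_rpow_const 0 q (Or.inr hq.le)).tendsto.comp hb
      simpa [Real.zero_rpow hq.ne', Function.comp_def] using hc
    apply squeeze_zero_norm _ hb2
    intro n
    · have hw : ∀ k ∈ Finset.range (n + 1),
          0 ≤ (Nat.choose n k : ℝ) * p ^ k * (1 - p) ^ (n - k) := by
        intro k _
        have : 0 < 1 - p := by linarith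
        positivity
      calc ‖D n - Bern n‖
          = |∑ k ∈ Finset.range (n + 1),
              (Nat.choose n k : ℝ) * p ^ k * (1 - p) ^ (n - k) *
                (((1 + (k : ℝ)) / ((n : ℝ) + 2)) ^ q - ((k : ℝ) / (n : ℝ)) ^ q)| := by
            rw [Real.norm_eq_abs, hD, hBern, ← Finset.sum_sub_distrib]
            congr 1
            exact Finset.sum_congr rfl fun k _ => by ring
        _ ≤ ∑ k ∈ Finset.range (n + 1),
              |(Nat.choose n k : ℝ) * p ^ k * (1 - p) ^ (n - k) *
                (((1 + (k : ℝ)) / ((n : ℝ) + 2)) ^ q - ((k : ℝ) / (n : ℝ)) ^ q)| :=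
            Finset.abs_sum_le_sum_abs _ _
        _ ≤ ∑ k ∈ Finset.range (n + 1),
              (Nat.choose n k : ℝ) * p ^ k * (1 - p) ^ (n - k) * (1 / ((n : ℝ) + 2)) ^ q := by
            apply Finset.sum_le_sum
            intro k hk
            rw [abs_mul, abs_of_nonneg (hw k hk)]
            apply mul_le_mul_of_nonneg_left _ (hw k hk)
            have hk' : k ≤ n := Nat.lt_succ_iff.mp (Finset.mem_range.mp hk)
            calc |((1 + (k : ℝ)) / ((n : ℝ) + 2)) ^ q - ((k : ℝ) / (n : ℝ)) ^ q|
                ≤ |(1 + (k : ℝ)) / ((n : ℝ) + 2) - (k : ℝ) / (n : ℝ)| ^ q :=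
                  stmt7_abs_rpow_sub_rpow_le q hq.le hq1 (by positivity) (by positivity)
              _ ≤ (1 / ((n : ℝ) + 2)) ^ q :=
                  Real.rpow_le_rpow (abs_nonneg _) (stmt7_node_bound n k hk') hq.le
        _ = (1 / ((n : ℝ) + 2)) ^ q := by
            rw [← Finset.sum_mul, stmt7_wsum, one_mul]
  have := (stmt7_bern_tendsto p q hp hp1 hq).add hdiff
  simp only [add_zero] at this
  apply this.congr
  intro n
  ring

/-- For `0 < p < e⁻¹` and `q > 0` with `-1 + q + p^q < 0`, the drift
`ΔV(x) = p(x+1)V(x+1) - p(x+2)V(x) + p·E[V(1+Y_x)]` of `V(x) = x^q`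
(with `Y_x ~ Bin(x-1,p)`) satisfies `ΔV(x)/(p(x+1)^q) → -1 + q + p^q`. -/
theorem stmt_7 (p q : ℝ) (hp : 0 < p) (hpe : p < Real.exp (-1))
    (hq : 0 < q) (hneg : -1 + q + p ^ q < 0) :
    Tendsto (fun x : ℕ =>
      (p * ((x : ℝ) + 1) * ((x : ℝ) + 1) ^ q - p * ((x : ℝ) + 2) * (x : ℝ) ^ q +
        p * ∑ k ∈ Finset.range x,
          (Nat.choose (x - 1) k : ℝ) * p ^ k * (1 - p) ^ (x - 1 - k) *
            (1 + (k : ℝ)) ^ q) /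
        (p * ((x : ℝ) + 1) ^ q))
      atTop (nhds (-1 + q + p ^ q)) := by
  have hp1 : p < 1 := by
    have h1 : Real.exp (-1) < 1 := by
      rw [Real.exp_lt_one_iff]; norm_num
    linarith
  have hq1 : q ≤ 1 := by
    nlinarith [Real.rpow_pos_of_pos hp q]
  have hA := stmt7_partA q hq
  have hD := stmt7_partD p q hp hp1 hq hq1
  have hB : Tendsto (fun x : ℕ =>
      (∑ k ∈ Finset.range x, (Nat.choose (x - 1) k : ℝ) * p ^ k * (1 - p) ^ (x - 1 - k) *
        (1 + (k : ℝ)) ^ q) / ((x : ℝ) + 1) ^ q) atTop (nhds (p ^ q)) := by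
    rw [← tendsto_add_atTop_iff_nat 1]
    apply hD.congr
    intro n
    simp only [Nat.add_sub_cancel, Finset.sum_div]
    have h2 : (((n + 1 : ℕ) : ℝ)) + 1 = (n : ℝ) + 2 := by push_cast; ring
    rw [h2]
    refine Finset.sum_congr rfl fun k hk => ?_
    rw [Real.div_rpow (by positivity) (by positivity), mul_div_assoc]
  have htot := hA.add hB
  have hval : (q - 1) + p ^ q = -1 + q + p ^ q := by ring
  rw [hval] at htot
  apply htot.congr
  intro x
  have hx1 : (0:ℝ) < (x : ℝ) + 1 := by positivity
  have hpow : (0:ℝ) < ((x : ℝ) + 1) ^ q := Real.rpow_pos_of_pos hx1 q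
  field_simp
end

section
/- Let 0 < p < 1 and q > 0 with -1 + q + p^q > 0. Define ΔV(x) = p·((x+1)^{q+1} - (x+2)·x^q + E[(1+Y_x)^q]) with Y_x ~ Binomial(x-1, p). Then there exists x_0 such that ΔV(x) > 0 for all integers x ≥ x_0. -/
lemma weights_sum (p : ℝ) (n : ℕ) :
    ∑ k ∈ Finset.range (n+1), (n.choose k : ℝ) * p^k * (1-p)^(n-k) = 1 := by
  have h := add_pow p (1-p) n
  rw [show p + (1-p) = 1 by ring, one_pow] at h
  calc ∑ k ∈ Finset.range (n+1), (n.choose k : ℝ) * p^k * (1-p)^(n-k)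
      = ∑ k ∈ Finset.range (n+1), p^k * (1-p)^(n-k) * (n.choose k : ℝ) :=
        Finset.sum_congr rfl fun k _ => by ring
    _ = 1 := h.symm

lemma variance_sum (p : ℝ) (n : ℕ) :
    ∑ k ∈ Finset.range (n+1),
      (n.choose k : ℝ) * p^k * (1-p)^(n-k) * ((k:ℝ) - p*n)^2 = n*p*(1-p) := by
  have h := congrArg (Polynomial.eval p) (bernsteinPolynomial.variance ℝ n)
  simp only [bernsteinPolynomial, Polynomial.eval_finset_sum, Polynomial.eval_mul,
    Polynomial.eval_pow, Polynomial.eval_sub, Polynomial.eval_one, Polynomial.eval_X,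
    Polynomial.eval_natCast, nsmul_eq_mul, smul_eq_mul] at h
  rw [← h]
  exact Finset.sum_congr rfl fun k _ => by ring

lemma bern_lb (q X : ℝ) (hq : 0 < q) (hX : 1 ≤ X) :
    (q-1) * X^q ≤ (X+1)^(q+1) - (X+2)*X^q := by
  have hX0 : (0:ℝ) < X := lt_of_lt_of_le one_pos hX
  have e1 : X^(q+1) = X^q * X := Real.rpow_add_one hX0.ne' q
  have e2 : X + 1 = X * (1 + 1/X) := by field_simp
  have e3 : (X+1)^(q+1) = X^(q+1) * (1+1/X)^(q+1) := by
    rw [e2, Real.mul_rpow hX0.le (by positivity)]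
  have e4 : 1 + (q+1)*(1/X) ≤ (1+1/X)^(q+1) :=
    one_add_mul_self_le_rpow_one_add (by
      have : (0:ℝ) < 1/X := by positivity
      linarith) (by linarith)
  have hXq1 : (0:ℝ) < X^(q+1) := Real.rpow_pos_of_pos hX0 _
  have step : X^(q+1) * (1 + (q+1)*(1/X)) ≤ X^(q+1) * (1+1/X)^(q+1) :=
    mul_le_mul_of_nonneg_left e4 hXq1.le
  have eq5 : X^(q+1) * (1 + (q+1)*(1/X)) = X^(q+1) + (q+1)*X^q := by
    rw [e1]; field_simp
  have hA : X^(q+1) + (q+1)*X^q ≤ (X+1)^(q+1) := by rw [e3]; linarith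
  have hB : (X+2)*X^q = X^(q+1) + 2*X^q := by rw [e1]; ring
  linarith

set_option maxHeartbeats 2000000 in
/-- For `0 < p < 1` and `q > 0` with `-1 + q + p^q > 0`, the drift
`ΔV(x) = p((x+1)^{q+1} - (x+2)x^q + E[(1+Y_x)^q])` with `Y_x ~ Bin(x-1,p)` is
eventually positive. -/
theorem stmt_15 (p q : ℝ) (hp : 0 < p) (hp1 : p < 1)
    (hq : 0 < q) (hpos : 0 < -1 + q + p ^ q) :
    ∃ x0 : ℕ, ∀ x : ℕ, x0 ≤ x →
      0 < p * (((x : ℝ) + 1) ^ (q + 1) - ((x : ℝ) + 2) * (x : ℝ) ^ q +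
        ∑ k ∈ Finset.range x,
          (Nat.choose (x - 1) k : ℝ) * p ^ k * (1 - p) ^ (x - 1 - k) *
            (1 + (k : ℝ)) ^ q) := by
  set ε : ℝ := (-1 + q + p ^ q) / 2 with hεdef
  have hε : 0 < ε := by positivity
  have hpq : (0:ℝ) < p ^ q := Real.rpow_pos_of_pos hp q
  set δ : ℝ := min (ε / (2 * p ^ q)) (1/2) with hδdef
  have hδ0 : 0 < δ := lt_min (by positivity) (by norm_num)
  have hδhalf : δ ≤ 1/2 := min_le_right _ _
  have hδle : δ ≤ ε / (2 * p ^ q) := min_le_left _ _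
  set t : ℝ := (1 - δ) ^ (1/q : ℝ) with htdef
  have h1δ : 0 < 1 - δ := by linarith
  have ht0 : 0 < t := Real.rpow_pos_of_pos h1δ _
  have ht1 : t < 1 := Real.rpow_lt_one h1δ.le (by linarith) (by positivity)
  have htq : t ^ q = 1 - δ := by
    rw [htdef, ← Real.rpow_mul h1δ.le, one_div_mul_cancel hq.ne', Real.rpow_one]
  set a : ℝ := p * t with hadef
  have ha0 : 0 < a := mul_pos hp ht0
  have hap : a < p := by
    calc a = p * t := rfl
    _ < p * 1 := by exact mul_lt_mul_of_pos_left ht1 hp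
    _ = p := mul_one p
  have haq : a ^ q = p ^ q * (1 - δ) := by
    rw [hadef, Real.mul_rpow hp.le ht0.le, htq]
  have haqlb : p ^ q - ε / 2 ≤ a ^ q := by
    rw [haq]
    have : p ^ q * δ ≤ p ^ q * (ε / (2 * p ^ q)) := mul_le_mul_of_nonneg_left hδle hpq.le
    have h2 : p ^ q * (ε / (2 * p ^ q)) = ε / 2 := by field_simp
    nlinarith
  have haq1 : a ^ q ≤ 1 := Real.rpow_le_one ha0.le (by linarith) hq.le
  have hpa : 0 < p - a := by linarith
  refine ⟨⌈2*p/(p-a)⌉₊ + ⌈8*p/((p-a)^2*ε)⌉₊ + 1, fun x hx => ?_⟩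
  have hx1 : 1 ≤ x := le_trans (by omega) hx
  -- real-valued bounds on x
  have hXA : 2*p/(p-a) ≤ (x:ℝ) := by
    refine le_trans (Nat.le_ceil _) ?_
    exact_mod_cast Nat.cast_le.mpr (by omega : (⌈2*p/(p-a)⌉₊ : ℕ) ≤ x)
  have hXB : 8*p/((p-a)^2*ε) ≤ (x:ℝ) := by
    refine le_trans (Nat.le_ceil _) ?_
    exact_mod_cast Nat.cast_le.mpr (by omega : (⌈8*p/((p-a)^2*ε)⌉₊ : ℕ) ≤ x)
  have hX1 : (1:ℝ) ≤ (x:ℝ) := by exact_mod_cast hx1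
  set X : ℝ := (x:ℝ) with hXdef
  have hX0 : (0:ℝ) < X := by linarith
  have hXq : (0:ℝ) < X ^ q := Real.rpow_pos_of_pos hX0 _
  set n : ℕ := x - 1 with hndef
  have hxn : x = n + 1 := by omega
  have hnX : (n:ℝ) = X - 1 := by
    rw [hXdef, hndef]
    push_cast [hx1]
    ring
  -- the weight function
  set W : ℕ → ℝ := fun k => ((n.choose k : ℝ) * p ^ k * (1 - p) ^ (n - k)) with hWdef
  have hWnn : ∀ k, 0 ≤ W k := fun k => by
    have : (0:ℝ) < 1 - p := by linarith
    rw [hWdef]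
    positivity
  clear_value W
  -- tail bound
  set F := (Finset.range (n+1)).filter (fun k : ℕ => a * X ≤ (k:ℝ)) with hFdef
  set T : ℝ := ∑ k ∈ (Finset.range (n+1)).filter (fun k : ℕ => ¬ (a * X ≤ (k:ℝ))), W k with hTdef
  clear_value F T
  have hT0 : 0 ≤ T := by
    rw [hTdef]
    exact Finset.sum_nonneg fun k _ => hWnn k
  have hc : 0 < (p - a) * X / 2 := by positivity
  have hchain : T * ((p - a) * X / 2)^2 ≤ X * p := by
    have step1 : T * ((p-a)*X/2)^2 ≤
        ∑ k ∈ (Finset.range (n+1)).filter (fun k : ℕ => ¬ (a * X ≤ (k:ℝ))),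
          W k * ((k:ℝ) - p*n)^2 := by
      rw [hTdef, Finset.sum_mul]
      refine Finset.sum_le_sum fun k hk => ?_
      have hk' : (k:ℝ) < a * X := not_le.mp (Finset.mem_filter.mp hk).2
      have h2p : 2*p ≤ (p-a)*X := by
        rw [div_le_iff₀ hpa] at hXA
        linarith
      have hd : (p-a)*X/2 ≤ p*(n:ℝ) - k := by rw [hnX]; nlinarith
      refine mul_le_mul_of_nonneg_left ?_ (hWnn k)
      calc ((p-a)*X/2)^2 ≤ (p*(n:ℝ) - k)^2 := pow_le_pow_left₀ hc.le hd 2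
        _ = ((k:ℝ) - p*(n:ℝ))^2 := by ring
    have step2 : ∑ k ∈ (Finset.range (n+1)).filter (fun k : ℕ => ¬ (a * X ≤ (k:ℝ))),
          W k * ((k:ℝ) - p*n)^2 ≤ (n:ℝ)*p*(1-p) := by
      rw [← variance_sum p n]
      simp only [hWdef]
      refine Finset.sum_le_sum_of_subset_of_nonneg (Finset.filter_subset _ _) ?_
      intro k _ _
      have h1p : (0:ℝ) < 1 - p := by linarith
      have := hWnn k
      positivity
    have step3 : (n:ℝ)*p*(1-p) ≤ X * p := by
      rw [hnX]
      nlinarith [mul_nonneg (by linarith : (0:ℝ) ≤ X-1) (sq_nonneg p)]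
    linarith
  have hTε : T ≤ ε / 2 := by
    have hc2 : (0:ℝ) < ((p-a)*X/2)^2 := by positivity
    have h1 : T ≤ X * p / ((p-a)*X/2)^2 := (le_div_iff₀ hc2).mpr hchain
    have h2X : 8*p ≤ ε*((p-a)^2*X) := by
      rw [div_le_iff₀ (by positivity)] at hXB
      nlinarith
    have h2 : X * p / ((p-a)*X/2)^2 ≤ ε / 2 := by
      rw [div_le_iff₀ hc2]
      nlinarith [mul_le_mul_of_nonneg_right h2X hX0.le]
    linarith
  -- lower bound on S
  have hsumsplit : (∑ k ∈ F, W k) + T = 1 := by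
    rw [hFdef, hTdef, Finset.sum_filter_add_sum_filter_not]
    simp only [hWdef]
    exact weights_sum p n
  have hSlb : (p ^ q - ε) * X ^ q ≤
      ∑ k ∈ Finset.range (n+1), W k * (1 + (k:ℝ)) ^ q := by
    have step1 : ∑ k ∈ F, W k * (1 + (k:ℝ)) ^ q ≤
        ∑ k ∈ Finset.range (n+1), W k * (1 + (k:ℝ)) ^ q := by
      rw [hFdef]
      refine Finset.sum_le_sum_of_subset_of_nonneg (Finset.filter_subset _ _) ?_
      intro k _ _
      have h1k : (0:ℝ) ≤ (1 + (k:ℝ)) ^ q := Real.rpow_nonneg (by positivity) _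
      exact mul_nonneg (hWnn k) h1k
    have step2 : ∑ k ∈ F, W k * (a ^ q * X ^ q) ≤ ∑ k ∈ F, W k * (1 + (k:ℝ)) ^ q := by
      rw [hFdef]
      refine Finset.sum_le_sum fun k hk => ?_
      have hk' : a * X ≤ (k:ℝ) := by
        have := (Finset.mem_filter.mp hk).2
        simpa using this
      have h1 : a ^ q * X ^ q ≤ (1 + (k:ℝ)) ^ q := by
        rw [← Real.mul_rpow ha0.le hX0.le]
        exact Real.rpow_le_rpow (by positivity) (by linarith) hq.le
      exact mul_le_mul_of_nonneg_left h1 (hWnn k)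
    have step3 : ∑ k ∈ F, W k * (a ^ q * X ^ q) = (1 - T) * (a ^ q * X ^ q) := by
      rw [← Finset.sum_mul]
      congr 1
      linarith
    have key : p ^ q - ε ≤ a ^ q * (1 - T) := by
      nlinarith [mul_nonneg (by linarith : (0:ℝ) ≤ 1 - a ^ q) hT0]
    have final : (p ^ q - ε) * X ^ q ≤ (1 - T) * (a ^ q * X ^ q) := by
      nlinarith [mul_le_mul_of_nonneg_right key hXq.le]
    linarith
  -- combine
  have hB := bern_lb q X hq hX1
  have hcoef : (q-1)*X^q + (p^q-ε)*X^q = ε*X^q := by rw [hεdef]; ring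
  have hin : 0 < (X + 1) ^ (q + 1) - (X + 2) * X ^ q +
      ∑ k ∈ Finset.range (n+1), W k * (1 + (k:ℝ)) ^ q := by
    linarith [hB, hSlb, hcoef, mul_pos hε hXq]
  have hrange : Finset.range x = Finset.range (n+1) := by rw [hxn]
  rw [hrange]
  simpa only [hWdef] using mul_pos hp hin
end

section
/- Let Y_n ~ Binomial(n, p) with 0 < p < 1 and fix q > 0. Then E[(1 + Y_n)^q] / (1 + np)^q → 1 as n → ∞. -/
open Filter Finset

set_option maxHeartbeats 1000000


noncomputable def bw (p : ℝ) (n k : ℕ) : ℝ :=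
  (Nat.choose n k : ℝ) * p ^ k * (1 - p) ^ (n - k)

lemma bw_nonneg {p : ℝ} (hp : 0 ≤ p) (hp1 : p ≤ 1) (n k : ℕ) : 0 ≤ bw p n k := by
  have h : (0:ℝ) ≤ 1 - p := by linarith
  unfold bw
  positivity

lemma bw_sum (p : ℝ) (n : ℕ) : ∑ k ∈ range (n + 1), bw p n k = 1 := by
  have h := add_pow p (1 - p) n
  simp only [add_sub_cancel, one_pow] at h
  rw [show (1:ℝ) = ∑ m ∈ range (n + 1), p ^ m * (1 - p) ^ (n - m) * ↑(n.choose m) from h]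
  apply Finset.sum_congr rfl
  intro k _
  unfold bw
  ring

lemma bw_fact_moment (p : ℝ) (n j : ℕ) :
    ∑ k ∈ range (n + 1), bw p n k * (Nat.choose k j : ℝ)
      = (Nat.choose n j : ℝ) * p ^ j := by
  by_cases hj : j ≤ n
  · have hsplit : ∑ k ∈ Finset.Ico 0 j, bw p n k * (Nat.choose k j : ℝ)
        + ∑ k ∈ Finset.Ico j (n+1), bw p n k * (Nat.choose k j : ℝ)
        = ∑ k ∈ range (n+1), bw p n k * (Nat.choose k j : ℝ) := by
      rw [Finset.range_eq_Ico]
      exact Finset.sum_Ico_consecutive _ (Nat.zero_le j) (by omega)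
    have h0 : ∑ k ∈ Finset.Ico 0 j, bw p n k * (Nat.choose k j : ℝ) = 0 := by
      apply Finset.sum_eq_zero
      intro k hk
      rw [Finset.mem_Ico] at hk
      rw [Nat.choose_eq_zero_of_lt hk.2]
      simp
    rw [← hsplit, h0, zero_add]
    rw [Finset.sum_Ico_eq_sum_range]
    have hrange : n + 1 - j = (n - j) + 1 := by omega
    rw [hrange]
    have hterm : ∀ i ∈ range ((n - j) + 1),
        bw p n (j + i) * (Nat.choose (j + i) j : ℝ)
          = ((Nat.choose n j : ℝ) * p ^ j) * bw p (n - j) i := by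
      intro i hi
      rw [Finset.mem_range] at hi
      have hjin : j + i ≤ n := by omega
      have hkey : Nat.choose n (j + i) * Nat.choose (j + i) j
          = Nat.choose n j * Nat.choose (n - j) i := by
        have := Nat.choose_mul (n := n) (Nat.le_add_right j i)
        rwa [Nat.add_sub_cancel_left] at this
      unfold bw
      have hc : ((Nat.choose n (j+i) : ℕ) : ℝ) * (Nat.choose (j+i) j : ℝ)
          = (Nat.choose n j : ℝ) * (Nat.choose (n-j) i : ℝ) := by
        exact_mod_cast congrArg (Nat.cast (R := ℝ)) hkey
      have hsub : n - (j + i) = (n - j) - i := by omega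
      rw [hsub, pow_add]
      linear_combination hc * (p ^ j * p ^ i * (1 - p) ^ (n - j - i))
    rw [Finset.sum_congr rfl hterm, ← Finset.mul_sum, bw_sum p (n - j), mul_one]
  · push_neg at hj
    rw [Nat.choose_eq_zero_of_lt hj]
    rw [Finset.sum_eq_zero]
    · simp
    intro k hk
    rw [Finset.mem_range] at hk
    rw [Nat.choose_eq_zero_of_lt (by omega)]
    simp



noncomputable def bB (p : ℝ) (m n : ℕ) : ℝ :=
  ∑ ij ∈ Finset.HasAntidiagonal.antidiagonal m,
    (m.factorial : ℝ) * (Nat.choose m ij.2 : ℝ) * ((Nat.choose n ij.1 : ℝ) * p ^ ij.1)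

lemma pow_le_fact_choose (k m : ℕ) : (k + 1) ^ m ≤ m.factorial * Nat.choose (k + m) m := by
  rw [← Nat.descFactorial_eq_factorial_mul_choose, Nat.descFactorial_eq_prod_range]
  calc (k+1)^m = ∏ _i ∈ range m, (k+1) := by rw [Finset.prod_const, Finset.card_range]
    _ ≤ ∏ i ∈ range m, (k + m - i) := by
        apply Finset.prod_le_prod'
        intro i hi
        rw [Finset.mem_range] at hi
        omega

lemma moment_le_bB {p : ℝ} (hp : 0 ≤ p) (hp1 : p ≤ 1) (m n : ℕ) :
    ∑ k ∈ range (n + 1), bw p n k * (1 + (k:ℝ)) ^ m ≤ bB p m n := by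
  have step1 : ∑ k ∈ range (n + 1), bw p n k * (1 + (k:ℝ)) ^ m
      ≤ ∑ k ∈ range (n + 1), bw p n k *
          ((m.factorial : ℝ) * (Nat.choose (k + m) m : ℝ)) := by
    apply Finset.sum_le_sum
    intro k _
    apply mul_le_mul_of_nonneg_left _ (bw_nonneg hp hp1 n k)
    have h := pow_le_fact_choose k m
    calc (1 + (k:ℝ)) ^ m = (((k+1 : ℕ) : ℕ) : ℝ) ^ m := by push_cast; ring_nf
      _ ≤ (m.factorial : ℝ) * (Nat.choose (k + m) m : ℝ) := by
          rw [← Nat.cast_pow]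
          exact_mod_cast h
  refine step1.trans_eq ?_
  have hvan : ∀ k, ((Nat.choose (k + m) m : ℕ) : ℝ)
      = ∑ ij ∈ Finset.HasAntidiagonal.antidiagonal m, (Nat.choose k ij.1 : ℝ) * (Nat.choose m ij.2 : ℝ) := by
    intro k
    rw [Nat.add_choose_eq]
    push_cast
    rfl
  unfold bB
  calc ∑ k ∈ range (n + 1), bw p n k * ((m.factorial : ℝ) * (Nat.choose (k + m) m : ℝ))
      = ∑ k ∈ range (n + 1), ∑ ij ∈ Finset.HasAntidiagonal.antidiagonal m,
          (m.factorial : ℝ) * (Nat.choose m ij.2 : ℝ) * (bw p n k * (Nat.choose k ij.1 : ℝ)) := by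
        apply Finset.sum_congr rfl
        intro k _
        rw [hvan k, Finset.mul_sum, Finset.mul_sum]
        apply Finset.sum_congr rfl
        intro ij _
        ring
    _ = ∑ ij ∈ Finset.HasAntidiagonal.antidiagonal m, ∑ k ∈ range (n + 1),
          (m.factorial : ℝ) * (Nat.choose m ij.2 : ℝ) * (bw p n k * (Nat.choose k ij.1 : ℝ)) :=
        Finset.sum_comm
    _ = ∑ ij ∈ Finset.HasAntidiagonal.antidiagonal m,
          (m.factorial : ℝ) * (Nat.choose m ij.2 : ℝ) * ((Nat.choose n ij.1 : ℝ) * p ^ ij.1) := by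
        apply Finset.sum_congr rfl
        intro ij _
        rw [← Finset.mul_sum, bw_fact_moment p n ij.1]


lemma hD_atTop {p : ℝ} (hp : 0 < p) :
    Tendsto (fun n : ℕ => 1 + (n:ℝ) * p) atTop atTop :=
  tendsto_atTop_add_const_left _ 1 (tendsto_natCast_atTop_atTop.atTop_mul_const hp)

lemma factor_tendsto {p : ℝ} (hp : 0 < p) (c : ℝ) :
    Tendsto (fun n : ℕ => (((n:ℝ) - c) * p) / (1 + (n:ℝ) * p)) atTop (nhds 1) := by
  have h0 : Tendsto (fun n : ℕ => 1 - (1 + c * p) / (1 + (n:ℝ) * p)) atTop (nhds 1) := by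
    have := (tendsto_const_nhds (x := (1 + c * p)) (f := atTop (α := ℕ))).div_atTop (hD_atTop hp)
    simpa using (tendsto_const_nhds (x := (1:ℝ)) (f := atTop (α := ℕ))).sub this
  apply h0.congr
  intro n
  have hD : (0:ℝ) < 1 + (n:ℝ) * p := by positivity
  field_simp
  ring

lemma bB_tendsto {p : ℝ} (hp : 0 < p) {m : ℕ} (hm : 1 ≤ m) :
    Tendsto (fun n : ℕ => bB p m n / (1 + (n:ℝ) * p) ^ m) atTop (nhds 1) := by
  have hD : ∀ n : ℕ, (0:ℝ) < 1 + (n:ℝ) * p := fun n => by positivity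
  have hterm : ∀ ij ∈ Finset.HasAntidiagonal.antidiagonal m,
      Tendsto (fun n : ℕ => (m.factorial : ℝ) * (Nat.choose m ij.2 : ℝ)
          * ((Nat.choose n ij.1 : ℝ) * p ^ ij.1) / (1 + (n:ℝ) * p) ^ m)
        atTop (nhds (if ij.1 = m then 1 else 0)) := by
    intro ij hij
    rw [Finset.HasAntidiagonal.mem_antidiagonal] at hij
    by_cases h1 : ij.1 = m
    · have h2 : ij.2 = 0 := by omega
      rw [if_pos h1, h1, h2]
      simp only [Nat.choose_zero_right, Nat.cast_one, mul_one]
      -- m! * C(n,m) * p^m / (1+np)^m  → 1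
      have hprod : Tendsto (fun n : ℕ =>
          ∏ i ∈ range m, (((n:ℝ) - (i:ℝ)) * p / (1 + (n:ℝ) * p))) atTop (nhds 1) := by
        have := tendsto_finset_prod (range m)
          (fun i _ => factor_tendsto hp (i:ℝ))
        simpa using this
      apply hprod.congr'
      filter_upwards [eventually_ge_atTop m] with n hn
      have hcast : ((m.factorial * Nat.choose n m : ℕ) : ℝ)
          = ∏ i ∈ range m, ((n:ℝ) - (i:ℝ)) := by
        rw [← Nat.descFactorial_eq_factorial_mul_choose, Nat.descFactorial_eq_prod_range,
          Nat.cast_prod]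
        apply Finset.prod_congr rfl
        intro i hi
        rw [Finset.mem_range] at hi
        rw [Nat.cast_sub (by omega)]
      rw [Finset.prod_div_distrib, Finset.prod_mul_distrib, Finset.prod_const,
        Finset.prod_const, Finset.card_range]
      rw [← hcast]
      push_cast
      ring
    · rw [if_neg h1]
      have ha : ij.1 + 1 ≤ m := by omega
      set c := (m.factorial : ℝ) * (Nat.choose m ij.2 : ℝ) with hc
      have hc0 : 0 ≤ c := by positivity
      apply squeeze_zero (g := fun n : ℕ => c / (1 + (n:ℝ) * p))
      · intro n
        have := hD n
        positivity
      · intro n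
        have hDn := hD n
        have hD1 : (1:ℝ) ≤ 1 + (n:ℝ) * p := by
          have : (0:ℝ) ≤ (n:ℝ) * p := by positivity
          linarith
        have hb1 : (Nat.choose n ij.1 : ℝ) * p ^ ij.1 ≤ (1 + (n:ℝ) * p) ^ ij.1 := by
          calc (Nat.choose n ij.1 : ℝ) * p ^ ij.1 ≤ (n:ℝ) ^ ij.1 * p ^ ij.1 := by
                have : (Nat.choose n ij.1 : ℝ) ≤ (n:ℝ) ^ ij.1 := by
                  exact_mod_cast Nat.choose_le_pow n ij.1
                apply mul_le_mul_of_nonneg_right this (by positivity)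
            _ = ((n:ℝ) * p) ^ ij.1 := by rw [mul_pow]
            _ ≤ (1 + (n:ℝ) * p) ^ ij.1 := by
                apply pow_le_pow_left₀ (by positivity) (by linarith)
        calc c * ((Nat.choose n ij.1 : ℝ) * p ^ ij.1) / (1 + (n:ℝ) * p) ^ m
            ≤ c * (1 + (n:ℝ) * p) ^ ij.1 / (1 + (n:ℝ) * p) ^ m := by
              apply div_le_div_of_nonneg_right ?_ (by positivity)
              exact mul_le_mul_of_nonneg_left hb1 hc0
          _ = c / (1 + (n:ℝ) * p) ^ (m - ij.1) := by
              rw [show m = ij.1 + (m - ij.1) by omega, pow_add]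
              field_simp
              rw [Nat.add_sub_cancel_left]
          _ ≤ c / (1 + (n:ℝ) * p) := by
              apply div_le_div_of_nonneg_left hc0 (by linarith)
              calc (1 + (n:ℝ) * p) = (1 + (n:ℝ) * p) ^ 1 := (pow_one _).symm
                _ ≤ (1 + (n:ℝ) * p) ^ (m - ij.1) :=
                    pow_le_pow_right₀ hD1 (by omega)
      · simpa using (tendsto_const_nhds (x := c) (f := atTop (α := ℕ))).div_atTop (hD_atTop hp)
  have := tendsto_finset_sum (Finset.HasAntidiagonal.antidiagonal m) hterm
  have hsum1 : ∑ ij ∈ Finset.HasAntidiagonal.antidiagonal m, (if ij.1 = m then (1:ℝ) else 0) = 1 := by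
    rw [Finset.sum_eq_single_of_mem (m, 0)]
    · simp
    · simp
    · intro ij hij hne
      rw [Finset.HasAntidiagonal.mem_antidiagonal] at hij
      rw [if_neg]
      intro h
      apply hne
      have : ij.2 = 0 := by omega
      exact Prod.ext h this
  rw [hsum1] at this
  apply this.congr
  intro n
  unfold bB
  rw [Finset.sum_div]



/-- For `Y_n ~ Binomial(n,p)` with `0 < p < 1` and `q > 0`,
`E[(1+Y_n)^q] / (1+np)^q → 1` as `n → ∞`. -/
theorem stmt_17 (p q : ℝ) (hp : 0 < p) (hp1 : p < 1) (hq : 0 < q) :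
    Tendsto (fun n : ℕ =>
      (∑ k ∈ Finset.range (n + 1),
        (Nat.choose n k : ℝ) * p ^ k * (1 - p) ^ (n - k) * (1 + (k : ℝ)) ^ q) /
        (1 + (n : ℝ) * p) ^ q)
      atTop (nhds 1) := by
  have hp0 : (0:ℝ) ≤ p := hp.le
  have hp1' : p ≤ 1 := hp1.le
  set m : ℕ := ⌈q⌉₊ with hmdef
  have hm1 : 1 ≤ m := Nat.one_le_iff_ne_zero.mpr (by
    have := Nat.ceil_pos.mpr hq; omega)
  have hqm : q ≤ (m:ℝ) := Nat.le_ceil q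
  have hm0 : (0:ℝ) < (m:ℝ) := by exact_mod_cast hm1
  set r : ℝ := 2 * (m:ℝ) - q with hrdef
  have hr_pos : 0 < r := by simp only [hrdef]; linarith
  have hr2m : r ≤ 2 * (m:ℝ) := by simp only [hrdef]; linarith
  have hD : ∀ n : ℕ, (0:ℝ) < 1 + (n:ℝ) * p := fun n => by positivity
  have hx : ∀ k : ℕ, (0:ℝ) < 1 + (k:ℝ) := fun k => by positivity
  have hwnn : ∀ n, ∀ k ∈ range (n+1), 0 ≤ bw p n k :=
    fun n k _ => bw_nonneg hp0 hp1' n k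
  -- mean
  have hmean : ∀ n : ℕ, ∑ k ∈ range (n+1), bw p n k * (1 + (k:ℝ)) = 1 + (n:ℝ) * p := by
    intro n
    have h1 := bw_fact_moment p n 1
    simp only [Nat.choose_one_right, pow_one] at h1
    have e0 : ∀ k ∈ range (n+1), bw p n k * (1 + (k:ℝ)) = bw p n k + bw p n k * (k:ℝ) := by
      intro k _; ring
    rw [Finset.sum_congr rfl e0, Finset.sum_add_distrib, bw_sum, h1]
  -- Jensen lower for integer moments
  have hJint : ∀ (j : ℕ) (n : ℕ), (1 + (n:ℝ) * p) ^ j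
      ≤ ∑ k ∈ range (n+1), bw p n k * (1 + (k:ℝ)) ^ j := by
    intro j n
    have := Real.pow_arith_mean_le_arith_mean_pow (range (n+1)) (bw p n)
      (fun k => 1 + (k:ℝ)) (hwnn n) (bw_sum p n) (fun k _ => (hx k).le) j
    rwa [hmean n] at this
  have hBpos : ∀ (j : ℕ) (n : ℕ), 0 < bB p j n := by
    intro j n
    calc (0:ℝ) < (1 + (n:ℝ) * p) ^ j := by positivity
      _ ≤ _ := (hJint j n).trans (moment_le_bB hp0 hp1' j n)
  -- Cauchy-Schwarz
  have hCS : ∀ n : ℕ,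
      (∑ k ∈ range (n+1), bw p n k * (1 + (k:ℝ)) ^ m) ^ 2
        ≤ (∑ k ∈ range (n+1), bw p n k * (1 + (k:ℝ)) ^ q)
          * (∑ k ∈ range (n+1), bw p n k * (1 + (k:ℝ)) ^ r) := by
    intro n
    have h := Finset.sum_mul_sq_le_sq_mul_sq (range (n+1))
      (fun k => Real.sqrt (bw p n k) * (1 + (k:ℝ)) ^ (q/2))
      (fun k => Real.sqrt (bw p n k) * (1 + (k:ℝ)) ^ (r/2))
    have e1 : ∀ k ∈ range (n+1),
        (Real.sqrt (bw p n k) * (1 + (k:ℝ)) ^ (q/2))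
          * (Real.sqrt (bw p n k) * (1 + (k:ℝ)) ^ (r/2))
        = bw p n k * (1 + (k:ℝ)) ^ m := by
      intro k hk
      have hb := hwnn n k hk
      calc (Real.sqrt (bw p n k) * (1 + (k:ℝ)) ^ (q/2))
            * (Real.sqrt (bw p n k) * (1 + (k:ℝ)) ^ (r/2))
          = (Real.sqrt (bw p n k) * Real.sqrt (bw p n k))
              * ((1 + (k:ℝ)) ^ (q/2) * (1 + (k:ℝ)) ^ (r/2)) := by ring
        _ = bw p n k * (1 + (k:ℝ)) ^ (q/2 + r/2) := by
            rw [Real.mul_self_sqrt hb, ← Real.rpow_add (hx k)]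
        _ = bw p n k * (1 + (k:ℝ)) ^ ((m:ℕ):ℝ) := by
            rw [show q/2 + r/2 = ((m:ℕ):ℝ) by simp only [hrdef]; ring]
        _ = bw p n k * (1 + (k:ℝ)) ^ m := by rw [Real.rpow_natCast]
    have e2 : ∀ (s : ℝ), ∀ k ∈ range (n+1),
        (Real.sqrt (bw p n k) * (1 + (k:ℝ)) ^ (s/2)) ^ 2
        = bw p n k * (1 + (k:ℝ)) ^ s := by
      intro s k hk
      have hb := hwnn n k hk
      rw [mul_pow, Real.sq_sqrt hb, sq, ← Real.rpow_add (hx k)]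
      norm_num
    rw [Finset.sum_congr rfl e1, Finset.sum_congr rfl (e2 q), Finset.sum_congr rfl (e2 r)] at h
    exact h
  -- concave Jensen: rpow moments vs integer moments
  have hJcon : ∀ (s : ℝ) (j : ℕ), 0 < s → s ≤ (j:ℝ) → ∀ n : ℕ,
      ∑ k ∈ range (n+1), bw p n k * (1 + (k:ℝ)) ^ s
        ≤ (∑ k ∈ range (n+1), bw p n k * (1 + (k:ℝ)) ^ j) ^ (s / (j:ℝ)) := by
    intro s j hs hsj n
    have hj0 : (0:ℝ) < (j:ℝ) := lt_of_lt_of_le hs hsj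
    have hP : 1 ≤ (j:ℝ) / s := (one_le_div hs).mpr hsj
    have h := Real.arith_mean_le_rpow_mean (range (n+1)) (bw p n)
      (fun k => (1 + (k:ℝ)) ^ s) (hwnn n) (bw_sum p n)
      (fun k _ => (Real.rpow_pos_of_pos (hx k) s).le) hP
    have e3 : ∀ k ∈ range (n+1),
        bw p n k * ((1 + (k:ℝ)) ^ s) ^ ((j:ℝ)/s) = bw p n k * (1 + (k:ℝ)) ^ j := by
      intro k hk
      rw [← Real.rpow_natCast (1 + (k:ℝ)) j, ← Real.rpow_mul (hx k).le,
        mul_div_cancel₀ _ hs.ne']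
    rw [Finset.sum_congr rfl e3, one_div_div] at h
    exact h
  -- upper bound
  have hup : ∀ n : ℕ,
      (∑ k ∈ range (n+1), bw p n k * (1 + (k:ℝ)) ^ q) / (1 + (n:ℝ) * p) ^ q
        ≤ (bB p m n / (1 + (n:ℝ) * p) ^ m) ^ (q / (m:ℝ)) := by
    intro n
    have h1 : ∑ k ∈ range (n+1), bw p n k * (1 + (k:ℝ)) ^ q
        ≤ (bB p m n) ^ (q / (m:ℝ)) := by
      refine (hJcon q m hq hqm n).trans ?_
      apply Real.rpow_le_rpow ?_ (moment_le_bB hp0 hp1' m n) (by positivity)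
      exact le_trans (by positivity) (hJint m n)
    have hU : (bB p m n / (1 + (n:ℝ) * p) ^ m) ^ (q / (m:ℝ))
        = (bB p m n) ^ (q / (m:ℝ)) / (1 + (n:ℝ) * p) ^ q := by
      rw [Real.div_rpow (hBpos m n).le (by positivity)]
      congr 1
      rw [← Real.rpow_natCast (1 + (n:ℝ) * p) m, ← Real.rpow_mul (hD n).le,
        mul_div_cancel₀ _ hm0.ne']
    rw [hU]
    exact div_le_div_of_nonneg_right h1 (by positivity)
  -- lower bound
  have hlow : ∀ n : ℕ,
      ((1 + (n:ℝ) * p) ^ (2*m) / bB p (2*m) n) ^ (r / (2 * (m:ℝ)))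
        ≤ (∑ k ∈ range (n+1), bw p n k * (1 + (k:ℝ)) ^ q) / (1 + (n:ℝ) * p) ^ q := by
    intro n
    set D := 1 + (n:ℝ) * p with hDdef
    set B := bB p (2*m) n with hBdef
    set μq := ∑ k ∈ range (n+1), bw p n k * (1 + (k:ℝ)) ^ q with hμqdef
    set μr := ∑ k ∈ range (n+1), bw p n k * (1 + (k:ℝ)) ^ r with hμrdef
    have hDn := hD n
    have hBp := hBpos (2*m) n
    have h2m : r ≤ ((2*m : ℕ):ℝ) := by push_cast; linarith
    have hr2m' : 0 < r / (2 * (m:ℝ)) := by positivity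
    -- chain
    have hchain : D ^ (2*m) ≤ μq * B ^ (r / (2 * (m:ℝ))) := by
      have c1 : D ^ (2*m) ≤ (∑ k ∈ range (n+1), bw p n k * (1 + (k:ℝ)) ^ m) ^ 2 := by
        rw [show 2*m = m*2 by ring, pow_mul]
        exact pow_le_pow_left₀ (by positivity) (hJint m n) 2
      have c2 : μr ≤ B ^ (r / (2 * (m:ℝ))) := by
        have := hJcon r (2*m) hr_pos h2m n
        refine this.trans ?_
        have : (∑ k ∈ range (n+1), bw p n k * (1 + (k:ℝ)) ^ (2*m)) ^ (r / ((2*m : ℕ):ℝ))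
            ≤ B ^ (r / ((2*m : ℕ):ℝ)) := by
          apply Real.rpow_le_rpow ?_ (moment_le_bB hp0 hp1' (2*m) n) (by positivity)
          exact le_trans (by positivity) (hJint (2*m) n)
        convert this using 3 <;> push_cast <;> rfl
      have c3 : μq * μr ≤ μq * B ^ (r / (2 * (m:ℝ))) := by
        apply mul_le_mul_of_nonneg_left c2
        apply Finset.sum_nonneg
        intro k hk
        exact mul_nonneg (hwnn n k hk) (Real.rpow_pos_of_pos (hx k) q).le
      exact c1.trans ((hCS n).trans c3)
    -- convert to ratio form
    have hkey : (D ^ (2*m) / B) ^ (r / (2 * (m:ℝ))) * D ^ q * B ^ (r / (2 * (m:ℝ)))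
        = D ^ (2*m) := by
      rw [mul_right_comm, ← Real.mul_rpow (by positivity) hBp.le,
        div_mul_cancel₀ _ hBp.ne']
      rw [← Real.rpow_natCast D (2*m), ← Real.rpow_mul hDn.le, ← Real.rpow_add hDn]
      congr 1
      push_cast
      field_simp
      ring
    have hmain : (D ^ (2*m) / B) ^ (r / (2 * (m:ℝ))) * D ^ q ≤ μq := by
      have hBr : (0:ℝ) < B ^ (r / (2 * (m:ℝ))) := Real.rpow_pos_of_pos hBp _
      have := hchain
      rw [← hkey] at this
      exact le_of_mul_le_mul_right this hBr
    rw [le_div_iff₀ (Real.rpow_pos_of_pos hDn q)]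
    exact hmain
  -- limits
  have hUlim : Tendsto (fun n : ℕ => (bB p m n / (1 + (n:ℝ) * p) ^ m) ^ (q / (m:ℝ)))
      atTop (nhds 1) := by
    have := (bB_tendsto hp hm1).rpow_const (p := q / (m:ℝ)) (Or.inr (by positivity))
    simpa using this
  have hLlim : Tendsto (fun n : ℕ =>
      ((1 + (n:ℝ) * p) ^ (2*m) / bB p (2*m) n) ^ (r / (2 * (m:ℝ)))) atTop (nhds 1) := by
    have hinv : Tendsto (fun n : ℕ => (1 + (n:ℝ) * p) ^ (2*m) / bB p (2*m) n)
        atTop (nhds 1) := by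
      have := (bB_tendsto hp (by omega : 1 ≤ 2*m)).inv₀ one_ne_zero
      simp only [inv_div, inv_one] at this
      exact this
    have := hinv.rpow_const (p := r / (2 * (m:ℝ))) (Or.inr (by positivity))
    simpa using this
  have final := tendsto_of_tendsto_of_tendsto_of_le_of_le hLlim hUlim
    (fun n => hlow n) (fun n => hup n)
  apply final.congr
  intro n
  simp only [bw]
end

section
/- Let 0 < p < 1/2 and let u = (u_k)_{k≥1} be a stationary distribution of the generator Q̄ (i.e., a probability vector with Σ_j u_j·q̄_{j,k} = 0 for all k). Define m_k = u_k/k. Then m is a (1-2p)-invariant measure for Q: for all k ≥ 1, Σ_{j≥1} m_j·q_{j,k} = -(1-2p)·m_k, and a = (m_k/Σ_i m_i)_{k≥1} is a quasi-stationary distribution of Q with eigenvalue -(1-2p). -/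
/-- The degree-process generator `Q` of the partial duplication graph. -/
noncomputable def qgen (p : ℝ) (j k : ℕ) : ℝ :=
  if k = j + 1 then (j : ℝ) * p
  else if k < j then (Nat.choose j k : ℝ) * p ^ k * (1 - p) ^ (j - k)
  else if k = j then -((j : ℝ) * p + 1 - p ^ j)
  else 0

lemma key (p : ℝ) (u : ℕ → ℝ) (hu0 : u 0 = 0) (k : ℕ) (hk : 1 ≤ k) (j : ℕ) :
    (u j / (j : ℝ)) * qgen p j k =
      (u j * qbar p j k) / k - (1 - 2 * p) * (if j = k then u k / k else 0) := by
  rcases Nat.eq_zero_or_pos j with hj | hj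
  · subst hj
    have hk0 : k ≠ 0 := by omega
    simp [hu0, hk0, Ne.symm hk0]
  have hjR : (j : ℝ) ≠ 0 := Nat.cast_ne_zero.mpr (by omega)
  have hkR : (k : ℝ) ≠ 0 := Nat.cast_ne_zero.mpr (by omega)
  rcases lt_trichotomy k j with hlt | heq | hgt
  · -- k < j
    have h1 : qgen p j k = (Nat.choose j k : ℝ) * p ^ k * (1 - p) ^ (j - k) := by
      simp only [qgen]
      rw [if_neg (by omega), if_pos hlt]
    have h2 : qbar p j k = (Nat.choose (j - 1) (k - 1) : ℝ) * p ^ k * (1 - p) ^ (j - k) := by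
      simp only [qbar]
      rw [if_pos ⟨hk, hlt⟩]
    have hnat : (j : ℝ) * (Nat.choose (j - 1) (k - 1) : ℝ) = (Nat.choose j k : ℝ) * k := by
      have h := Nat.add_one_mul_choose_eq (j - 1) (k - 1)
      have hnat' : j * Nat.choose (j - 1) (k - 1) = Nat.choose j k * k := by
        have hj1 : j - 1 + 1 = j := by omega
        have hk1 : k - 1 + 1 = k := by omega
        rw [← hj1, ← hk1]
        simpa [Nat.succ_eq_add_one] using h
      exact_mod_cast hnat'
    rw [h1, h2, if_neg (by omega), mul_zero, sub_zero, div_mul_eq_mul_div,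
      div_eq_div_iff hjR hkR]
    linear_combination (-(u j * p ^ k * (1 - p) ^ (j - k))) * hnat
  · -- k = j
    subst heq
    have h1 : qgen p k k = -((k : ℝ) * p + 1 - p ^ k) := by
      simp [qgen]
    have h2 : qbar p k k = p ^ k - (2 + (k : ℝ)) * p := by
      simp [qbar]
    rw [h1, h2, if_pos rfl]
    field_simp
    ring
  · -- k > j
    rcases Nat.eq_or_lt_of_le hgt with heq | hgt'
    · -- k = j + 1
      have h1 : qgen p j k = (j : ℝ) * p := by simp [qgen, ← heq]
      have h2 : qbar p j k = ((j : ℝ) + 1) * p := by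
        simp [qbar, ← heq, (by omega : ¬ (1 ≤ k ∧ k < j))]
      rw [h1, h2, if_neg (by omega), ← heq]
      push_cast
      field_simp
      ring
    · have h1 : qgen p j k = 0 := by
        simp only [qgen]
        rw [if_neg (by omega), if_neg (by omega), if_neg (by omega)]
      have h2 : qbar p j k = 0 := by
        simp only [qbar]
        rw [if_neg (by omega), if_neg (by omega), if_neg (by omega)]
      rw [h1, h2, if_neg (by omega)]
      simp

/-- If `u` is a stationary distribution of `Q̄`, then `m_k = u_k/k` is a
`(1-2p)`-invariant measure for `Q`, and the normalization `a = m / Σm` is a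
quasi-stationary distribution of `Q` with eigenvalue `-(1-2p)`. -/
theorem stmt_19 (p : ℝ) (hp : 0 < p) (hp2 : p < 1/2)
    (u : ℕ → ℝ) (hu0 : u 0 = 0) (hupos : ∀ k, 0 ≤ u k)
    (husum : ∑' k : ℕ, u k = 1) (huS : Summable u)
    (hstatS : ∀ k : ℕ, 1 ≤ k → Summable (fun j : ℕ => u j * qbar p j k))
    (hstat : ∀ k : ℕ, 1 ≤ k → ∑' j : ℕ, u j * qbar p j k = 0) :
    (∀ k : ℕ, 1 ≤ k →
      ∑' j : ℕ, (u j / (j : ℝ)) * qgen p j k = -(1 - 2 * p) * (u k / (k : ℝ))) ∧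
    (∑' k : ℕ, (u k / (k : ℝ)) / (∑' i : ℕ, u i / (i : ℝ)) = 1) ∧
    (∀ k : ℕ, 0 ≤ (u k / (k : ℝ)) / (∑' i : ℕ, u i / (i : ℝ))) ∧
    (∀ k : ℕ, 1 ≤ k →
      ∑' j : ℕ, ((u j / (j : ℝ)) / (∑' i : ℕ, u i / (i : ℝ))) * qgen p j k =
        -(1 - 2 * p) * ((u k / (k : ℝ)) / (∑' i : ℕ, u i / (i : ℝ)))) := by
  -- summability of the indicator term
  have hindS : ∀ k : ℕ, Summable (fun j : ℕ =>
      (1 - 2 * p) * (if j = k then u k / (k : ℝ) else 0)) := by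
    intro k
    apply summable_of_ne_finset_zero (s := {k})
    intro j hj
    simp only [Finset.mem_singleton] at hj
    simp [hj]
  have hmS1 : ∀ k : ℕ, 1 ≤ k → Summable (fun j : ℕ => (u j / (j : ℝ)) * qgen p j k) := by
    intro k hk
    have := ((hstatS k hk).div_const (k : ℝ)).sub (hindS k)
    exact this.congr fun j => (key p u hu0 k hk j).symm
  have part1 : ∀ k : ℕ, 1 ≤ k →
      ∑' j : ℕ, (u j / (j : ℝ)) * qgen p j k = -(1 - 2 * p) * (u k / (k : ℝ)) := by
    intro k hk
    have heq : ∀ j : ℕ, (u j / (j : ℝ)) * qgen p j k =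
        (u j * qbar p j k) / k - (1 - 2 * p) * (if j = k then u k / k else 0) :=
      key p u hu0 k hk
    rw [tsum_congr heq, Summable.tsum_sub ((hstatS k hk).div_const _) (hindS k)]
    rw [tsum_div_const, hstat k hk, tsum_mul_left, tsum_ite_eq]
    ring
  -- m summable
  have hm_nonneg : ∀ k : ℕ, 0 ≤ u k / (k : ℝ) := fun k =>
    div_nonneg (hupos k) (Nat.cast_nonneg k)
  have hmS : Summable (fun k : ℕ => u k / (k : ℝ)) := by
    apply Summable.of_nonneg_of_le hm_nonneg _ huS
    intro k
    rcases Nat.eq_zero_or_pos k with h | h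
    · simp [h, hu0]
    · exact div_le_self (hupos k) (by exact_mod_cast h)
  set S : ℝ := ∑' i : ℕ, u i / (i : ℝ) with hS
  have hSpos : 0 < S := by
    by_contra h
    push_neg at h
    have hall : ∀ k, u k / (k : ℝ) = 0 := by
      intro k
      have hle := Summable.le_tsum hmS k (fun i _ => hm_nonneg i)
      have := hm_nonneg k
      linarith
    have hallu : ∀ k, u k = 0 := by
      intro k
      rcases Nat.eq_zero_or_pos k with hk | hk
      · simpa [hk] using hu0
      · have := hall k
        have hkR : (k : ℝ) ≠ 0 := Nat.cast_ne_zero.mpr (by omega)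
        field_simp at this
        simpa using this
    rw [tsum_congr hallu] at husum
    simp at husum
  have hSne : S ≠ 0 := ne_of_gt hSpos
  refine ⟨part1, ?_, ?_, ?_⟩
  · rw [tsum_div_const, div_self hSne]
  · intro k
    exact div_nonneg (hm_nonneg k) (le_of_lt hSpos)
  · intro k hk
    have : (fun j : ℕ => (u j / (j : ℝ)) / S * qgen p j k) =
        fun j : ℕ => ((u j / (j : ℝ)) * qgen p j k) / S := by
      funext j; ring
    rw [this, tsum_div_const, part1 k hk]
    ring
end
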